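/- arXiv:2510.05639 — 7 statements merged into one kernel-verified Lean document; each statement's English description precedes it below -/
import Mathlib

section
/- Let X be a locally compact Hausdorff space and let P(X) be the set of probability Radon measures over X endowed with the weak topology. Then for every bounded continuous function g : X → ℝ, the map P(X) → ℝ, μ ↦ ∫ g dμ, is continuous; consequently, the weak topology on P(X) coincides with the initial topology induced by the maps μ ↦ ∫ g dμ corresponding to all bounded continuous functions g : X → ℝ. -/
open MeasureTheory Topology

noncomputable section

/-- The set of probability Radon measures over `X`: probability Borel measures which are
regular (finite on compacts, outer regular, and inner regular on open sets by compact
sets). -/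
def ProbRadon (X : Type*) [TopologicalSpace X] [MeasurableSpace X] : Type _ :=
  {μ : Measure X // IsProbabilityMeasure μ ∧ μ.Regular}

/-- The weak topology on `ProbRadon X`: the initial topology induced by the maps
`μ ↦ ∫ k dμ` corresponding to continuous functions `k : X → ℝ` with compact support. -/
def weakTopology (X : Type*) [TopologicalSpace X] [MeasurableSpace X] :
    TopologicalSpace (ProbRadon X) :=
  ⨅ k : {k : X → ℝ // Continuous k ∧ HasCompactSupport k},
    TopologicalSpace.induced (fun μ : ProbRadon X => ∫ x, k.1 x ∂μ.1) inferInstance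

instance (X : Type*) [TopologicalSpace X] [MeasurableSpace X] :
    TopologicalSpace (ProbRadon X) := weakTopology X

/-- Let `X` be a locally compact Hausdorff space and `P(X)` the set of
probability Radon measures over `X` endowed with the weak topology.  Then for every
bounded continuous `g : X → ℝ` the map `μ ↦ ∫ g dμ` is continuous; consequently, the
weak topology on `P(X)` coincides with the initial topology induced by the maps
`μ ↦ ∫ g dμ` corresponding to all bounded continuous functions `g : X → ℝ`. -/
theorem weakTopology_eq_boundedContinuous_initial_topology
    (X : Type*) [TopologicalSpace X] [LocallyCompactSpace X] [T2Space X]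
    [MeasurableSpace X] [BorelSpace X] :
    (∀ g : X → ℝ, Continuous g → (∃ M : ℝ, ∀ x, |g x| ≤ M) →
        Continuous (fun μ : ProbRadon X => ∫ x, g x ∂μ.1)) ∧
    weakTopology X =
      ⨅ g : {g : X → ℝ // Continuous g ∧ ∃ M : ℝ, ∀ x, |g x| ≤ M},
        TopologicalSpace.induced (fun μ : ProbRadon X => ∫ x, g.1 x ∂μ.1) inferInstance := by
  classical
  have contK : ∀ k : X → ℝ, Continuous k → HasCompactSupport k →
      Continuous (fun μ : ProbRadon X => ∫ x, k x ∂μ.1) := by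
    intro k hk hkc
    exact continuous_iInf_dom (i := ⟨k, hk, hkc⟩) continuous_induced_dom
  have part1 : ∀ g : X → ℝ, Continuous g → (∃ M : ℝ, ∀ x, |g x| ≤ M) →
      Continuous (fun μ : ProbRadon X => ∫ x, g x ∂μ.1) := by
    rintro g hg ⟨M, hM⟩
    set M' := max M 0 with hM'def
    have hM'0 : 0 ≤ M' := le_max_right _ _
    have hgM : ∀ x, |g x| ≤ M' := fun x => (hM x).trans (le_max_left _ _)
    rw [continuous_iff_continuousAt]
    intro μ₀
    haveI : IsProbabilityMeasure μ₀.1 := μ₀.2.1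
    rw [ContinuousAt, Metric.tendsto_nhds]
    intro ε hε
    set δ := ε / (2 * M' + 2) with hδdef
    have hδ : 0 < δ := div_pos hε (by linarith)
    have hδε : (2 * M' + 2) * δ = ε := by
      rw [hδdef]; field_simp
    obtain ⟨K, -, hKc, hKμ⟩ := μ₀.2.2.innerRegular (U := Set.univ) isOpen_univ
      (ENNReal.ofReal (1 - δ))
      (by rw [measure_univ]; exact ENNReal.ofReal_lt_one.2 (by linarith))
    obtain ⟨f, hf1, -, hfc, hf01⟩ :=
      exists_continuous_one_zero_of_isCompact hKc isClosed_empty (Set.disjoint_empty _)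
    have int_g : ∀ ν : ProbRadon X, Integrable g ν.1 := fun ν => by
      haveI : IsProbabilityMeasure ν.1 := ν.2.1
      exact ⟨hg.aestronglyMeasurable, HasFiniteIntegral.of_bounded (C := M')
        (Filter.Eventually.of_forall fun x => by simpa [Real.norm_eq_abs] using hgM x)⟩
    have int_f : ∀ ν : ProbRadon X, Integrable f ν.1 := fun ν => by
      haveI : IsProbabilityMeasure ν.1 := ν.2.1
      exact f.continuous.integrable_of_hasCompactSupport hfc
    have int_gf : ∀ ν : ProbRadon X, Integrable (fun x => g x * f x) ν.1 := fun ν => by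
      haveI : IsProbabilityMeasure ν.1 := ν.2.1
      exact (hg.mul f.continuous).integrable_of_hasCompactSupport hfc.mul_left
    have key : ∀ ν : ProbRadon X,
        |∫ x, g x ∂ν.1 - ∫ x, g x * f x ∂ν.1| ≤ M' * (1 - ∫ x, f x ∂ν.1) := by
      intro ν
      haveI : IsProbabilityMeasure ν.1 := ν.2.1
      rw [← integral_sub (int_g ν) (int_gf ν)]
      have hbd : ∀ x, |g x - g x * f x| ≤ M' * (1 - f x) := by
        intro x
        have h01 := hf01 x
        have he : g x - g x * f x = g x * (1 - f x) := by ring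
        rw [he, abs_mul, abs_of_nonneg (by linarith [h01.2] : (0:ℝ) ≤ 1 - f x)]
        exact mul_le_mul_of_nonneg_right (hgM x) (by linarith [h01.2])
      calc |∫ x, (g x - g x * f x) ∂ν.1| ≤ ∫ x, |g x - g x * f x| ∂ν.1 := by
            simpa [Real.norm_eq_abs] using
              norm_integral_le_integral_norm (μ := ν.1) (fun x => g x - g x * f x)
        _ ≤ ∫ x, M' * (1 - f x) ∂ν.1 := by
            apply integral_mono ((int_g ν).sub (int_gf ν)).abs
            · exact ((integrable_const (1:ℝ)).sub (int_f ν)).const_mul M'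
            · exact hbd
        _ = M' * (1 - ∫ x, f x ∂ν.1) := by
            rw [integral_const_mul, integral_sub (integrable_const (1:ℝ)) (int_f ν)]
            simp
    have hfμ₀ : 1 - δ < ∫ x, f x ∂μ₀.1 := by
      have h1 : ∫ x in K, f x ∂μ₀.1 ≤ ∫ x, f x ∂μ₀.1 :=
        setIntegral_le_integral (int_f μ₀) (Filter.Eventually.of_forall fun x => (hf01 x).1)
      have h2 : ∫ x in K, f x ∂μ₀.1 = (μ₀.1 K).toReal := by
        rw [setIntegral_congr_fun hKc.measurableSet (fun x hx => hf1 hx)]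
        simp; rfl
      have hne : μ₀.1 K ≠ ⊤ := (measure_lt_top _ _).ne
      have h3 : (ENNReal.ofReal (1 - δ)).toReal < (μ₀.1 K).toReal :=
        ENNReal.toReal_strict_mono hne hKμ
      have h4 : 1 - δ ≤ (ENNReal.ofReal (1 - δ)).toReal := by
        rcases le_total 0 (1 - δ) with h | h
        · rw [ENNReal.toReal_ofReal h]
        · rw [ENNReal.ofReal_of_nonpos h]; simpa using h
      linarith
    have cf : Continuous (fun ν : ProbRadon X => ∫ x, f x ∂ν.1) :=
      contK f f.continuous hfc
    have cgf : Continuous (fun ν : ProbRadon X => ∫ x, g x * f x ∂ν.1) :=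
      contK _ (hg.mul f.continuous) hfc.mul_left
    have ev1 : ∀ᶠ ν in 𝓝 μ₀, 1 - δ < ∫ x, f x ∂ν.1 :=
      cf.continuousAt.eventually (eventually_gt_nhds hfμ₀)
    have ev2 : ∀ᶠ ν in 𝓝 μ₀,
        dist (∫ x, g x * f x ∂ν.1) (∫ x, g x * f x ∂μ₀.1) < δ :=
      Metric.tendsto_nhds.1 cgf.continuousAt δ hδ
    filter_upwards [ev1, ev2] with ν h1 h2
    rw [Real.dist_eq]
    rw [Real.dist_eq] at h2
    have k1 := key ν
    have k2 := key μ₀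
    have b1 : M' * (1 - ∫ x, f x ∂ν.1) ≤ M' * δ :=
      mul_le_mul_of_nonneg_left (by linarith) hM'0
    have b2 : M' * (1 - ∫ x, f x ∂μ₀.1) ≤ M' * δ :=
      mul_le_mul_of_nonneg_left (by linarith) hM'0
    have tri1 := abs_sub_le (∫ x, g x ∂ν.1) (∫ x, g x * f x ∂ν.1) (∫ x, g x ∂μ₀.1)
    have tri2 := abs_sub_le (∫ x, g x * f x ∂ν.1) (∫ x, g x * f x ∂μ₀.1) (∫ x, g x ∂μ₀.1)
    have k2' : |∫ x, g x * f x ∂μ₀.1 - ∫ x, g x ∂μ₀.1| ≤ M' * (1 - ∫ x, f x ∂μ₀.1) := by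
      rw [abs_sub_comm]; exact k2
    linarith
  refine ⟨part1, le_antisymm ?_ ?_⟩
  · exact le_iInf fun g => continuous_iff_le_induced.1 (part1 g.1 g.2.1 g.2.2)
  · rw [weakTopology]
    refine le_iInf fun k => ?_
    have hb : ∃ M : ℝ, ∀ x, |k.1 x| ≤ M := by
      obtain ⟨C, hC⟩ := k.2.1.bounded_above_of_compact_support k.2.2
      exact ⟨C, fun x => by simpa [Real.norm_eq_abs] using hC x⟩
    exact iInf_le_of_le ⟨k.1, k.2.1, hb⟩ le_rfl

end
end

section
/- Let X and Y be locally compact Hausdorff spaces, K ⊆ X and L ⊆ Y compact sets, φ : X×Y → ℝ a continuous function with support contained in K×L, and ε > 0. Then there exist finitely many continuous functions α_1,…,α_n : X → ℝ with support contained in K and continuous functions β_1,…,β_n : Y → ℝ with support contained in L such that |φ(x,y) − Σ_{j=1}^n α_j(x)β_j(y)| ≤ ε for all (x,y) ∈ X×Y. -/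
/-!
Cover the compact set of first coordinates where `|φ| ≥ ε / 2` by finitely many open sets
`U j ∋ x j` on which `φ (·, y)` stays within `ε / 2` of `φ (x j, y)` uniformly in `y` (a tube
lemma, using compactness of `L`), and take a partition of unity `α j` subordinate to them, with
`β j := φ (x j, ·)`. Where `∑ α j = 1` the error is an average of errors `≤ ε / 2`; elsewhere
`|φ| < ε / 2`, which bounds the defect `(1 - ∑ α j) φ`.
-/

open Topology

open Set Function

section

variable {X Y : Type*} [TopologicalSpace X] [TopologicalSpace Y]

theorem abs_sub_sum_mul_le_two_mul {ι : Type*} [Fintype ι] {w b : ι → ℝ} {a δ : ℝ}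
    (hδ : 0 ≤ δ) (hw : ∀ i, 0 ≤ w i) (hw_le : ∑ i, w i ≤ 1)
    (hb : ∀ i, w i ≠ 0 → |a - b i| ≤ δ) (ha : ∑ i, w i = 1 ∨ |a| ≤ δ) :
    |a - ∑ i, w i * b i| ≤ 2 * δ := by
  have hsplit : a - ∑ i, w i * b i = ∑ i, w i * (a - b i) + (1 - ∑ i, w i) * a := by
    simp only [mul_sub, Finset.sum_sub_distrib, ← Finset.sum_mul]
    ring
  have hsum : |∑ i, w i * (a - b i)| ≤ δ :=
    calc |∑ i, w i * (a - b i)| ≤ ∑ i, |w i * (a - b i)| := Finset.abs_sum_le_sum_abs _ _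
      _ ≤ ∑ i, w i * δ := by
          refine Finset.sum_le_sum fun i _ => ?_
          rw [abs_mul, abs_of_nonneg (hw i)]
          rcases eq_or_ne (w i) 0 with h | h
          · simp [h]
          · exact mul_le_mul_of_nonneg_left (hb i h) (hw i)
      _ = (∑ i, w i) * δ := (Finset.sum_mul ..).symm
      _ ≤ δ := mul_le_of_le_one_left hδ hw_le
  have hrest : |(1 - ∑ i, w i) * a| ≤ δ := by
    rcases ha with h | h
    · simp [h, hδ]
    · rw [abs_mul, abs_of_nonneg (sub_nonneg.2 hw_le)]
      have : 0 ≤ ∑ i, w i := Finset.sum_nonneg fun i _ => hw i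
      nlinarith [abs_nonneg a]
  rw [hsplit, two_mul]
  exact (abs_add_le _ _).trans (add_le_add hsum hrest)

theorem exists_isOpen_forall_abs_sub_lt {φ : X × Y → ℝ} (hφ : Continuous φ) {L : Set Y}
    (hL : IsCompact L) (hφL : ∀ x, ∀ y ∉ L, φ (x, y) = 0) (x : X) {δ : ℝ} (hδ : 0 < δ) :
    ∃ U, IsOpen U ∧ x ∈ U ∧ ∀ x' ∈ U, ∀ y, |φ (x', y) - φ (x, y)| < δ := by
  obtain ⟨V, hV, hVδ⟩ := hL.mem_uniformity_of_prod (f := fun x y => φ (x, y))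
    hφ.continuousOn (mem_univ x) (Metric.dist_mem_uniformity hδ)
  rw [nhdsWithin_univ] at hV
  obtain ⟨U, hUV, hU, hxU⟩ := mem_nhds_iff.1 hV
  refine ⟨U, hU, hxU, fun x' hx' y => ?_⟩
  by_cases hy : y ∈ L
  · exact hVδ x' (hUV hx') y hy
  · simpa [hφL _ y hy] using hδ

theorem exists_fin_partitionOfUnity_isSubordinate [LocallyCompactSpace X] [T2Space X]
    {S : Set X} (hS : IsCompact S) (U : X → Set X) (hUo : ∀ x ∈ S, IsOpen (U x))
    (hxU : ∀ x ∈ S, x ∈ U x) :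
    ∃ (n : ℕ) (c : Fin n → X) (f : PartitionOfUnity (Fin n) X S),
      (∀ i, c i ∈ S) ∧ f.IsSubordinate (fun i => U (c i)) := by
  obtain ⟨T, hTS, hcov⟩ := hS.elim_nhds_subcover U fun x hx => (hUo x hx).mem_nhds (hxU x hx)
  let c : Fin T.card → X := fun i => T.equivFin.symm i
  have hcS : ∀ i, c i ∈ S := fun i => hTS _ (T.equivFin.symm i).2
  have hcov' : S ⊆ ⋃ i, U (c i) := by
    intro x hx
    obtain ⟨z, hz, hxz⟩ := mem_iUnion₂.1 (hcov hx)
    exact mem_iUnion.2 ⟨T.equivFin ⟨z, hz⟩, by simpa [c] using hxz⟩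
  obtain ⟨f, hf, -⟩ := PartitionOfUnity.exists_isSubordinate_of_locallyFinite_t2space hS _
    (fun i => hUo _ (hcS i)) (locallyFinite_of_finite _) hcov'
  exact ⟨_, c, f, hcS, hf⟩

theorem Continuous.support_subset_interior_prod {M : Type*} [Zero M] [TopologicalSpace M]
    [T1Space M] {φ : X × Y → M} (hφ : Continuous φ) {K : Set X} {L : Set Y}
    (hφs : tsupport φ ⊆ K ×ˢ L) : support φ ⊆ interior K ×ˢ interior L :=
  interior_prod_eq K L ▸ interior_maximal ((subset_tsupport φ).trans hφs) hφ.isOpen_support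

theorem isCompact_setOf_le_abs {f : X → ℝ} (hf : Continuous f) (hfc : HasCompactSupport f)
    {δ : ℝ} (hδ : 0 < δ) : IsCompact {x | δ ≤ |f x|} := by
  refine hfc.of_isClosed_subset (isClosed_le continuous_const hf.abs) fun x hx => ?_
  refine subset_tsupport f fun h0 => ?_
  simp only [mem_ofPred_eq, h0, abs_zero] at hx
  linarith

end

theorem exists_sum_of_products_approximation_general
    (X Y : Type*) [TopologicalSpace X] [LocallyCompactSpace X] [T2Space X]
    [TopologicalSpace Y]
    (K : Set X) (L : Set Y) (hK : IsCompact K) (hL : IsCompact L)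
    (φ : X × Y → ℝ) (hφ : Continuous φ) (hφs : tsupport φ ⊆ K ×ˢ L)
    (ε : ℝ) (hε : 0 < ε) :
    ∃ (n : ℕ) (α : Fin n → X → ℝ) (β : Fin n → Y → ℝ),
      (∀ j, Continuous (α j) ∧ tsupport (α j) ⊆ K) ∧
      (∀ j, Continuous (β j) ∧ tsupport (β j) ⊆ L) ∧
      ∀ (x : X) (y : Y), |φ (x, y) - ∑ j, α j x * β j y| ≤ ε := by
  set S := Prod.fst '' {p | ε / 2 ≤ |φ p|}
  have hS : IsCompact S := (isCompact_setOf_le_abs hφ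
    ((hK.prod hL).of_isClosed_subset (isClosed_tsupport φ) hφs) (half_pos hε)).image continuous_fst
  have hSK : S ⊆ interior K := by
    rintro _ ⟨p, hp, rfl⟩
    have hp0 : φ p ≠ 0 := fun h => by simp [h] at hp; linarith
    exact (hφ.support_subset_interior_prod hφs hp0).1
  have hφL : ∀ x, ∀ y ∉ L, φ (x, y) = 0 := fun x y hy =>
    image_eq_zero_of_notMem_tsupport fun h => hy (hφs h).2
  choose! U hUo hxU hU using fun x => exists_isOpen_forall_abs_sub_lt hφ hL hφL x (half_pos hε)
  obtain ⟨n, c, f, -, hf⟩ := exists_fin_partitionOfUnity_isSubordinate hS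
    (fun x => U x ∩ interior K) (fun x _ => (hUo x).inter isOpen_interior)
    fun x hx => ⟨hxU x, hSK hx⟩
  refine ⟨n, fun j => f j, fun j y => φ (c j, y), fun j => ⟨(f j).continuous,
    (hf j).trans (inter_subset_right.trans interior_subset)⟩, fun j => ⟨by fun_prop,
    (tsupport_comp_subset_preimage φ (by fun_prop)).trans fun y hy => (hφs hy).2⟩, fun x y => ?_⟩
  have hsum : ∑ j, f j x = ∑ᶠ j, f j x := (finsum_eq_sum_of_fintype _).symm
  have hclose : ∀ j, f j x ≠ 0 → |φ (x, y) - φ (c j, y)| ≤ ε / 2 := fun j hj =>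
    (hU (c j) x (hf j (subset_tsupport _ hj)).1 y).le
  have hsmall : ∑ j, f j x = 1 ∨ |φ (x, y)| ≤ ε / 2 := by
    by_cases hx : x ∈ S
    · exact Or.inl (hsum ▸ f.sum_eq_one hx)
    · exact Or.inr (not_le.1 fun h => hx ⟨(x, y), h, rfl⟩).le
  calc _ ≤ 2 * (ε / 2) := abs_sub_sum_mul_le_two_mul (half_pos hε).le (fun j => f.nonneg j x)
        (hsum ▸ f.sum_le_one x) hclose hsmall
    _ = ε := by ring

/-- Let `X` and `Y` be locally compact Hausdorff spaces, `K ⊆ X` and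
`L ⊆ Y` compact sets, `φ : X × Y → ℝ` a continuous function with support contained in
`K ×ˢ L`, and `ε > 0`.  Then there exist finitely many continuous functions
`α 0, …, α (n-1) : X → ℝ` with support contained in `K` and continuous functions
`β 0, …, β (n-1) : Y → ℝ` with support contained in `L` such that
`|φ (x, y) − ∑ j, α j x * β j y| ≤ ε` for all `(x, y) ∈ X × Y`. -/
theorem exists_sum_of_products_approximation
    (X Y : Type*) [TopologicalSpace X] [LocallyCompactSpace X] [T2Space X]
    [TopologicalSpace Y] [LocallyCompactSpace Y] [T2Space Y]
    (K : Set X) (L : Set Y) (hK : IsCompact K) (hL : IsCompact L)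
    (φ : X × Y → ℝ) (hφ : Continuous φ) (hφs : tsupport φ ⊆ K ×ˢ L)
    (ε : ℝ) (hε : 0 < ε) :
    ∃ (n : ℕ) (α : Fin n → X → ℝ) (β : Fin n → Y → ℝ),
      (∀ j, Continuous (α j) ∧ tsupport (α j) ⊆ K) ∧
      (∀ j, Continuous (β j) ∧ tsupport (β j) ⊆ L) ∧
      ∀ (x : X) (y : Y), |φ (x, y) - ∑ j, α j x * β j y| ≤ ε :=
  exists_sum_of_products_approximation_general X Y K L hK hL φ hφ hφs ε hε
end

section
/- Let Z be a compact Hausdorff space, C ⊆ Z a closed set, and M a nonempty compact subset of the space of finite Radon measures over Z endowed with the weak topology (the initial topology induced by the maps φ ↦ ∫ f dφ corresponding to continuous functions f : Z → ℝ), such that φ(C) = 0 for every φ ∈ M. Then for every ε > 0 there exists a compact set L ⊆ Z∖C such that φ(Z∖L) ≤ ε for all φ ∈ M. -/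
open MeasureTheory Topology

noncomputable section

/-- The set of finite Radon measures over a (compact) Hausdorff space `Z`. -/
def FiniteRadon (Z : Type*) [TopologicalSpace Z] [MeasurableSpace Z] : Type _ :=
  {φ : Measure Z // IsFiniteMeasure φ ∧ φ.Regular}

/-- The weak topology on `FiniteRadon Z`: the initial topology induced by the maps
`φ ↦ ∫ f dφ` corresponding to continuous functions `f : Z → ℝ`. -/
instance (Z : Type*) [TopologicalSpace Z] [MeasurableSpace Z] :
    TopologicalSpace (FiniteRadon Z) :=
  ⨅ f : {f : Z → ℝ // Continuous f},
    TopologicalSpace.induced (fun φ : FiniteRadon Z => ∫ z, f.1 z ∂φ.1) inferInstance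

/-- Evaluation against a continuous function is continuous for the weak topology. -/
lemma FiniteRadon.continuous_eval {Z : Type*} [TopologicalSpace Z] [MeasurableSpace Z]
    (f : Z → ℝ) (hf : Continuous f) :
    Continuous (fun φ : FiniteRadon Z => ∫ z, f z ∂φ.1) :=
  continuous_iInf_dom (i := ⟨f, hf⟩) continuous_induced_dom

/-- Let `Z` be a compact Hausdorff space, `C ⊆ Z` closed, and `M` a
nonempty compact family of finite Radon measures over `Z` (with the weak topology) with
`φ(C) = 0` for all `φ ∈ M`.  Then for every `ε > 0` there is a compact `L ⊆ Z ∖ C` with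
`φ(Z ∖ L) ≤ ε` for all `φ ∈ M`. -/
theorem compact_family_uniformly_small_near_null_closed_set
    (Z : Type*) [TopologicalSpace Z] [CompactSpace Z] [T2Space Z]
    [MeasurableSpace Z] [BorelSpace Z]
    (C : Set Z) (hC : IsClosed C)
    (M : Set (FiniteRadon Z)) (hM : IsCompact M) (hMne : M.Nonempty)
    (hMC : ∀ φ ∈ M, φ.1 C = 0) :
    ∀ ε : ENNReal, 0 < ε →
      ∃ L : Set Z, IsCompact L ∧ L ⊆ Cᶜ ∧ ∀ φ ∈ M, φ.1 Lᶜ ≤ ε := by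
  intro ε hε
  -- choose a real `δ > 0` with `ofReal (2 * δ) ≤ ε`
  set δ : ℝ := (min ε 1).toReal / 2 with hδdef
  have hmin_ne_top : min ε 1 ≠ ⊤ := ne_top_of_le_ne_top (by simp) (min_le_right _ _)
  have hmin_pos : 0 < min ε 1 := lt_min hε one_pos
  have hδpos : 0 < δ := by
    have := ENNReal.toReal_pos hmin_pos.ne' hmin_ne_top
    positivity
  have hδε : ENNReal.ofReal (2 * δ) ≤ ε := by
    have : ENNReal.ofReal (2 * δ) = min ε 1 := by
      rw [hδdef]
      rw [show 2 * ((min ε 1).toReal / 2) = (min ε 1).toReal by ring]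
      exact ENNReal.ofReal_toReal hmin_ne_top
    rw [this]
    exact min_le_left _ _
  -- for each measure in `M` find a good continuous function
  have key : ∀ φ : M, ∃ f : Z → ℝ, Continuous f ∧ (∀ z, f z ∈ Set.Icc (0:ℝ) 1) ∧
      (∀ z ∈ C, f z = 1) ∧ ∫ z, f z ∂(φ : FiniteRadon Z).1 < δ := by
    rintro ⟨φ, hφ⟩
    haveI := φ.2.1
    haveI : φ.1.Regular := φ.2.2
    have hC0 : φ.1 C < ENNReal.ofReal δ := by
      rw [hMC φ hφ]
      exact ENNReal.ofReal_pos.2 hδpos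
    obtain ⟨U, hCU, hUopen, hUlt⟩ := Set.exists_isOpen_lt_of_lt C _ hC0
    have hdisj : Disjoint Uᶜ C := Set.disjoint_compl_left_iff_subset.2 hCU
    obtain ⟨f, hf0, hf1, hf01⟩ :=
      exists_continuous_zero_one_of_isClosed hUopen.isClosed_compl hC hdisj
    refine ⟨f, f.continuous, hf01, fun z hz => hf1 hz, ?_⟩
    -- `∫ f ≤ μ U < δ`
    have hint : Integrable (fun z => f z) φ.1 := f.continuous.integrable_of_hasCompactSupport
      (HasCompactSupport.of_compactSpace _)
    have hle : ∀ z, f z ≤ U.indicator (fun _ => (1:ℝ)) z := by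
      intro z
      by_cases hz : z ∈ U
      · simp [Set.indicator_of_mem hz, (hf01 z).2]
      · have : f z = 0 := hf0 hz
        simp [Set.indicator_of_notMem hz, this]
    have hind : Integrable (U.indicator fun _ => (1:ℝ)) φ.1 :=
      (integrable_const (1:ℝ)).indicator hUopen.measurableSet
    calc ∫ z, f z ∂φ.1 ≤ ∫ z, U.indicator (fun _ => (1:ℝ)) z ∂φ.1 :=
          integral_mono hint hind hle
      _ = (φ.1 U).toReal := by
          rw [integral_indicator_const _ hUopen.measurableSet]; simp; rfl
      _ < δ := ENNReal.toReal_lt_of_lt_ofReal hUlt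
  choose f hfc hf01 hfC hfint using key
  -- open cover of `M`
  set V : M → Set (FiniteRadon Z) := fun p => {ψ | ∫ z, f p z ∂ψ.1 < δ} with hV
  have hVopen : ∀ p, IsOpen (V p) := fun p =>
    isOpen_Iio.preimage (FiniteRadon.continuous_eval (f p) (hfc p))
  have hcover : M ⊆ ⋃ p, V p := fun ψ hψ => Set.mem_iUnion.2 ⟨⟨ψ, hψ⟩, hfint ⟨ψ, hψ⟩⟩
  obtain ⟨t, ht⟩ := hM.elim_finite_subcover V hVopen hcover
  have htne : t.Nonempty := by
    obtain ⟨ψ, hψ⟩ := hMne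
    obtain ⟨p, hpt, -⟩ := Set.mem_iUnion₂.1 (ht hψ)
    exact ⟨p, hpt⟩
  -- the minimum of the chosen functions
  set g : Z → ℝ := fun z => t.inf' htne (fun p => f p z) with hg
  have hgc : Continuous g := by
    simpa using Continuous.finset_inf'_apply htne (fun p _ => hfc p)
  have hg_nonneg : ∀ z, 0 ≤ g z := fun z =>
    Finset.le_inf' htne _ (fun p _ => (hf01 p z).1)
  have hgC : ∀ z ∈ C, g z = 1 := by
    intro z hz
    obtain ⟨p0, hp0⟩ := id htne
    refine le_antisymm ((Finset.inf'_le _ hp0).trans_eq (hfC p0 z hz)) ?_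
    exact Finset.le_inf' htne _ (fun p _ => (hfC p z hz).ge)
  refine ⟨{z | g z ≤ 1/2}, (isClosed_le hgc continuous_const).isCompact, ?_, ?_⟩
  · intro z hz hzC
    have := hgC z hzC
    simp only [Set.mem_setOf_eq, this] at hz
    linarith
  · intro ψ hψ
    haveI := ψ.2.1
    obtain ⟨p, hpt, hpV⟩ := Set.mem_iUnion₂.1 (ht hψ)
    have hgint : Integrable g ψ.1 := hgc.integrable_of_hasCompactSupport
      (HasCompactSupport.of_compactSpace _)
    have hfpint : Integrable (fun z => f p z) ψ.1 := (hfc p).integrable_of_hasCompactSupport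
      (HasCompactSupport.of_compactSpace _)
    have hle : ∫ z, g z ∂ψ.1 ≤ ∫ z, f p z ∂ψ.1 :=
      integral_mono hgint hfpint (fun z => Finset.inf'_le _ hpt)
    have hlt : ∫ z, g z ∂ψ.1 < δ := hle.trans_lt hpV
    -- Markov
    have hmarkov := mul_meas_ge_le_integral_of_nonneg
      (Filter.Eventually.of_forall hg_nonneg) hgint (1/2) (μ := ψ.1)
    have hsub : {z | g z ≤ 1/2}ᶜ ⊆ {z | (1:ℝ)/2 ≤ g z} := by
      intro z hz
      simp only [Set.mem_compl_iff, Set.mem_setOf_eq, not_le] at hz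
      exact hz.le
    have hmeas_lt : (ψ.1 {z | (1:ℝ)/2 ≤ g z}).toReal < 2 * δ := by
      nlinarith [hmarkov, hlt, show (ψ.1).real {x | 1/2 ≤ g x} = (ψ.1 {z | (1:ℝ)/2 ≤ g z}).toReal from rfl]
    calc ψ.1 {z | g z ≤ 1/2}ᶜ ≤ ψ.1 {z | (1:ℝ)/2 ≤ g z} := measure_mono hsub
      _ ≤ ENNReal.ofReal (2 * δ) := by
          rw [← ENNReal.ofReal_toReal (measure_ne_top ψ.1 _)]
          exact ENNReal.ofReal_le_ofReal hmeas_lt.le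
      _ ≤ ε := hδε

end
end

section
/- For every function α from the positive integers to the positive integers, there exists a positive, convex, decreasing, continuously differentiable function h : ℝ → ℝ such that h(x) < α(i)⁻¹ whenever i is a positive integer and x ≥ i − 1. -/
open Real MeasureTheory Set

/-- running maximum of `α` (as naturals), at least 1. -/
noncomputable def pcdA (α : ℕ+ → ℕ+) (m : ℕ) : ℕ :=
  (Finset.range (m + 1)).sup (fun j => if h : 0 < j then (α ⟨j, h⟩ : ℕ) else 1)

noncomputable def pcdEps (α : ℕ+ → ℕ+) (n : ℕ) : ℝ :=
  (16 : ℝ)⁻¹ ^ n / (8 * (pcdA α (n + 1) : ℝ))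

noncomputable def pcdClamp (s : ℝ) : ℝ := max 0 (min 1 s)

noncomputable def pcdF (α : ℕ+ → ℕ+) (n : ℕ) (t : ℝ) : ℝ :=
  pcdEps α n * pcdClamp ((n : ℝ) + 1 - t)

noncomputable def pcdV (α : ℕ+ → ℕ+) (t : ℝ) : ℝ := ∑' n, pcdF α n t

lemma pcdA_pos (α : ℕ+ → ℕ+) (m : ℕ) : 1 ≤ pcdA α m := by
  have h0 : (0 : ℕ) ∈ Finset.range (m + 1) := by simp
  have := Finset.le_sup (f := fun j => if h : 0 < j then (α ⟨j, h⟩ : ℕ) else 1) h0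
  simp only [lt_irrefl, dif_neg, not_lt, le_refl] at this
  rw [dif_neg not_false] at this
  exact this

lemma pcdA_ge (α : ℕ+ → ℕ+) (i : ℕ+) (m : ℕ) (him : (i : ℕ) ≤ m) :
    (α i : ℕ) ≤ pcdA α m := by
  have h0 : (i : ℕ) ∈ Finset.range (m + 1) := by
    simp [Nat.lt_succ_iff, him]
  have := Finset.le_sup (f := fun j => if h : 0 < j then (α ⟨j, h⟩ : ℕ) else 1) h0
  beta_reduce at this
  rw [dif_pos i.pos] at this
  exact this

lemma pcdEps_pos (α : ℕ+ → ℕ+) (n : ℕ) : 0 < pcdEps α n := by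
  apply div_pos (by positivity)
  have := pcdA_pos α (n + 1)
  positivity

lemma pcdClamp_nonneg (s : ℝ) : 0 ≤ pcdClamp s := le_max_left _ _

lemma pcdClamp_le_one (s : ℝ) : pcdClamp s ≤ 1 := by
  unfold pcdClamp
  rcases le_or_gt s 1 with h | h
  · exact max_le zero_le_one (min_le_left _ _)
  · simp [min_eq_left h.le]

lemma pcdClamp_mono : Monotone pcdClamp := fun a b hab =>
  max_le_max le_rfl (min_le_min le_rfl hab)

lemma pcdClamp_of_nonpos {s : ℝ} (hs : s ≤ 0) : pcdClamp s = 0 := by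
  unfold pcdClamp
  rcases le_total 1 s with h | h
  · linarith
  · rw [min_eq_right h, max_eq_left hs]

lemma pcdClamp_of_one_le {s : ℝ} (hs : 1 ≤ s) : pcdClamp s = 1 := by
  unfold pcdClamp
  rw [min_eq_left hs]
  simp

lemma pcdClamp_le_exp (s : ℝ) : pcdClamp s ≤ Real.exp s := by
  rcases le_or_gt s 0 with h | h
  · rw [pcdClamp_of_nonpos h]; positivity
  · exact (pcdClamp_le_one s).trans (by nlinarith [Real.add_one_le_exp s])

lemma pcdClamp_continuous : Continuous pcdClamp :=
  continuous_const.max (continuous_const.min continuous_id)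

lemma pcdF_nonneg (α : ℕ+ → ℕ+) (n : ℕ) (t : ℝ) : 0 ≤ pcdF α n t :=
  mul_nonneg (pcdEps_pos α n).le (pcdClamp_nonneg _)

lemma pcdF_le_eps (α : ℕ+ → ℕ+) (n : ℕ) (t : ℝ) : pcdF α n t ≤ pcdEps α n := by
  have := mul_le_mul_of_nonneg_left (pcdClamp_le_one ((n : ℝ) + 1 - t)) (pcdEps_pos α n).le
  simpa [pcdF] using this

lemma pcdEps_le (α : ℕ+ → ℕ+) (n : ℕ) : pcdEps α n ≤ (16 : ℝ)⁻¹ ^ n := by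
  unfold pcdEps
  have h1 : (1 : ℝ) ≤ 8 * (pcdA α (n + 1) : ℝ) := by
    have := pcdA_pos α (n + 1)
    have : (1 : ℝ) ≤ (pcdA α (n + 1) : ℝ) := by exact_mod_cast this
    nlinarith
  rw [div_le_iff₀ (by linarith)]
  nlinarith [pow_nonneg (by norm_num : (0:ℝ) ≤ (16:ℝ)⁻¹) n]

lemma summable_sixteen : Summable (fun n : ℕ => (16 : ℝ)⁻¹ ^ n) :=
  summable_geometric_of_lt_one (by norm_num) (by norm_num)

lemma summable_four : Summable (fun n : ℕ => (4 : ℝ)⁻¹ ^ n) :=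
  summable_geometric_of_lt_one (by norm_num) (by norm_num)

lemma pcdF_summable (α : ℕ+ → ℕ+) (t : ℝ) : Summable (fun n => pcdF α n t) :=
  Summable.of_nonneg_of_le (fun n => pcdF_nonneg α n t)
    (fun n => (pcdF_le_eps α n t).trans (pcdEps_le α n)) summable_sixteen

/-- The key pointwise bound. -/
lemma pcdF_le (α : ℕ+ → ℕ+) (n : ℕ) (t b : ℝ) (hb : 1 ≤ b)
    (hA : ∀ m : ℕ, t < (m : ℝ) + 1 → b ≤ (pcdA α (m + 1) : ℝ)) :
    pcdF α n t ≤ Real.exp 1 * Real.exp (-t) / (8 * b) * (4 : ℝ)⁻¹ ^ n := by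
  have hb0 : (0 : ℝ) < b := lt_of_lt_of_le one_pos hb
  rcases le_or_gt ((n : ℝ) + 1) t with h | h
  · have : pcdF α n t = 0 := by
      simp [pcdF, pcdClamp_of_nonpos (by linarith : (n : ℝ) + 1 - t ≤ 0)]
    rw [this]
    positivity
  · have hA' : b ≤ (pcdA α (n + 1) : ℝ) := hA n h
    have h1 : pcdF α n t ≤ (16 : ℝ)⁻¹ ^ n / (8 * b) * Real.exp ((n : ℝ) + 1 - t) := by
      unfold pcdF pcdEps
      apply mul_le_mul
      · apply div_le_div_of_nonneg_left (by positivity) (by positivity)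
        nlinarith
      · exact pcdClamp_le_exp _
      · exact pcdClamp_nonneg _
      · positivity
    refine h1.trans ?_
    have hexp : Real.exp ((n : ℝ) + 1 - t) = Real.exp n * (Real.exp 1 * Real.exp (-t)) := by
      rw [← Real.exp_add, ← Real.exp_add]; ring_nf
    rw [hexp]
    have key : (16 : ℝ)⁻¹ ^ n * Real.exp n ≤ (4 : ℝ)⁻¹ ^ n := by
      have : (16 : ℝ)⁻¹ ^ n * Real.exp n = (Real.exp 1 / 16) ^ n := by
        rw [← Real.exp_one_rpow (n : ℝ), Real.rpow_natCast, div_pow, mul_comm]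
        rw [div_eq_mul_inv, ← inv_pow]
      rw [this]
      apply pow_le_pow_left₀ (by positivity)
      rw [div_le_iff₀ (by norm_num)]
      nlinarith [Real.exp_one_lt_d9]
    calc (16 : ℝ)⁻¹ ^ n / (8 * b) * (Real.exp n * (Real.exp 1 * Real.exp (-t)))
        = ((16 : ℝ)⁻¹ ^ n * Real.exp n) * (Real.exp 1 * Real.exp (-t) / (8 * b)) := by ring
      _ ≤ (4 : ℝ)⁻¹ ^ n * (Real.exp 1 * Real.exp (-t) / (8 * b)) := by
          apply mul_le_mul_of_nonneg_right key (by positivity)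
      _ = Real.exp 1 * Real.exp (-t) / (8 * b) * (4 : ℝ)⁻¹ ^ n := by ring

lemma pcdV_le (α : ℕ+ → ℕ+) (t b : ℝ) (hb : 1 ≤ b)
    (hA : ∀ m : ℕ, t < (m : ℝ) + 1 → b ≤ (pcdA α (m + 1) : ℝ)) :
    pcdV α t ≤ Real.exp 1 / (6 * b) * Real.exp (-t) := by
  have hb0 : (0 : ℝ) < b := lt_of_lt_of_le one_pos hb
  have h1 : pcdV α t ≤ ∑' n : ℕ, Real.exp 1 * Real.exp (-t) / (8 * b) * (4 : ℝ)⁻¹ ^ n := by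
    apply Summable.tsum_le_tsum (fun n => pcdF_le α n t b hb hA) (pcdF_summable α t)
    exact (summable_four.mul_left _)
  refine h1.trans ?_
  rw [tsum_mul_left, tsum_geometric_of_lt_one (by norm_num) (by norm_num)]
  rw [show (1 - (4:ℝ)⁻¹)⁻¹ = 4/3 by norm_num]
  rw [div_mul_eq_mul_div, div_mul_eq_mul_div, div_le_div_iff₀ (by positivity) (by positivity)]
  ring_nf
  nlinarith [Real.exp_pos (1:ℝ), Real.exp_pos (-t)]

lemma pcdV_le_global (α : ℕ+ → ℕ+) (t : ℝ) :
    pcdV α t ≤ Real.exp 1 / 6 * Real.exp (-t) := by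
  have := pcdV_le α t 1 le_rfl (fun m _ => by exact_mod_cast pcdA_pos α (m + 1))
  simpa using this

lemma pcdV_nonneg (α : ℕ+ → ℕ+) (t : ℝ) : 0 ≤ pcdV α t :=
  tsum_nonneg (fun n => pcdF_nonneg α n t)

lemma pcdV_pos (α : ℕ+ → ℕ+) (t : ℝ) : 0 < pcdV α t := by
  set n₀ : ℕ := ⌈t⌉₊
  have hle : t ≤ (n₀ : ℝ) := Nat.le_ceil t
  have h1 : pcdF α n₀ t = pcdEps α n₀ := by
    rw [pcdF, pcdClamp_of_one_le (by linarith), mul_one]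
  have h2 : pcdF α n₀ t ≤ pcdV α t :=
    Summable.le_tsum (pcdF_summable α t) n₀ (fun j _ => pcdF_nonneg α j t)
  rw [h1] at h2
  exact lt_of_lt_of_le (pcdEps_pos α n₀) h2

lemma pcdV_continuous (α : ℕ+ → ℕ+) : Continuous (pcdV α) := by
  apply continuous_tsum (u := fun n => (16 : ℝ)⁻¹ ^ n)
  · intro n
    exact continuous_const.mul (pcdClamp_continuous.comp (by continuity))
  · exact summable_sixteen
  · intro n t
    rw [Real.norm_eq_abs, abs_of_nonneg (pcdF_nonneg α n t)]
    exact (pcdF_le_eps α n t).trans (pcdEps_le α n)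

lemma pcdV_antitone (α : ℕ+ → ℕ+) : Antitone (pcdV α) := by
  intro s t hst
  apply Summable.tsum_le_tsum _ (pcdF_summable α t) (pcdF_summable α s)
  intro n
  unfold pcdF
  exact mul_le_mul_of_nonneg_left (pcdClamp_mono (by linarith)) (pcdEps_pos α n).le

lemma pcdV_integrableOn (α : ℕ+ → ℕ+) (a : ℝ) : IntegrableOn (pcdV α) (Ioi a) := by
  have hmaj : IntegrableOn (fun t => Real.exp 1 / 6 * Real.exp (-(1 : ℝ) * t)) (Ioi a) :=
    (exp_neg_integrableOn_Ioi a one_pos).const_mul _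
  apply Integrable.mono' hmaj ((pcdV_continuous α).aestronglyMeasurable)
  filter_upwards with t
  rw [Real.norm_eq_abs, abs_of_nonneg (pcdV_nonneg α t)]
  simpa using pcdV_le_global α t

/-- For every function `α` from the positive integers to the positive
integers, there exists a positive, convex, (strictly) decreasing, continuously
differentiable function `h : ℝ → ℝ` such that `h x < (α i)⁻¹` whenever `i` is a positive
integer and `x ≥ i - 1`. -/
theorem positive_convex_decreasing_majorant (α : ℕ+ → ℕ+) :
    ∃ h : ℝ → ℝ,
      (∀ x : ℝ, 0 < h x) ∧
      ConvexOn ℝ Set.univ h ∧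
      StrictAnti h ∧
      ContDiff ℝ 1 h ∧
      ∀ (i : ℕ+) (x : ℝ), (i : ℝ) - 1 ≤ x → h x < ((α i : ℝ))⁻¹ := by
  set v : ℝ → ℝ := pcdV α with hv
  have vcont : Continuous v := pcdV_continuous α
  have vint : ∀ a : ℝ, IntegrableOn v (Ioi a) := pcdV_integrableOn α
  set C : ℝ := ∫ t in Ioi (0 : ℝ), v t with hC
  have hIoc : ∀ a b : ℝ, IntegrableOn v (Ioc a b) := fun a b => vcont.integrableOn_Ioc
  have key : ∀ x : ℝ, C - (∫ t in (0 : ℝ)..x, v t) = ∫ t in Ioi x, v t := by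
    intro x
    rcases le_or_gt 0 x with hx | hx
    · rw [intervalIntegral.integral_of_le hx]
      have hsplit : C = (∫ t in Ioc 0 x, v t) + ∫ t in Ioi x, v t := by
        rw [hC, ← setIntegral_union (Ioc_disjoint_Ioi le_rfl) measurableSet_Ioi
          (hIoc 0 x) (vint x), Ioc_union_Ioi_eq_Ioi hx]
      rw [hsplit]; ring
    · rw [intervalIntegral.integral_symm, intervalIntegral.integral_of_le hx.le]
      have hsplit : (∫ t in Ioi x, v t) = (∫ t in Ioc x 0, v t) + C := by
        rw [hC, ← setIntegral_union (Ioc_disjoint_Ioi le_rfl) measurableSet_Ioi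
          (hIoc x 0) (vint 0), Ioc_union_Ioi_eq_Ioi hx.le]
      rw [hsplit]; ring
  have hD : ∀ x : ℝ, HasDerivAt (fun x => C - ∫ t in (0 : ℝ)..x, v t) (-(v x)) x := by
    intro x
    have h1 : HasDerivAt (fun u => ∫ t in (0 : ℝ)..u, v t) (v x) x :=
      intervalIntegral.integral_hasDerivAt_right (vcont.intervalIntegrable _ _)
        (vcont.stronglyMeasurableAtFilter _ _) vcont.continuousAt
    have := (hasDerivAt_const x C).sub h1
    simp only [zero_sub] at this
    exact this
  have hderiv : deriv (fun x => C - ∫ t in (0 : ℝ)..x, v t) = fun x => -(v x) :=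
    funext fun x => (hD x).deriv
  refine ⟨fun x => C - ∫ t in (0 : ℝ)..x, v t, ?_, ?_, ?_, ?_, ?_⟩
  · -- positivity
    intro x
    show 0 < C - ∫ t in (0 : ℝ)..x, v t
    rw [key x]
    rw [setIntegral_pos_iff_support_of_nonneg_ae
      (ae_of_all _ (fun t => pcdV_nonneg α t)) (vint x)]
    have hsub : Ioi x ⊆ Function.support v ∩ Ioi x :=
      fun t ht => ⟨(pcdV_pos α t).ne', ht⟩
    calc (0 : ENNReal) < volume (Ioi x) := by
          rw [Real.volume_Ioi]; exact ENNReal.zero_lt_top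
      _ ≤ volume (Function.support v ∩ Ioi x) := measure_mono hsub
  · -- convexity
    apply Monotone.convexOn_univ_of_deriv (fun x => (hD x).differentiableAt)
    rw [hderiv]
    exact fun a b hab => neg_le_neg (pcdV_antitone α hab)
  · -- strict antitone
    apply strictAnti_of_deriv_neg
    intro x
    rw [hderiv]
    simpa using pcdV_pos α x
  · -- C¹
    rw [contDiff_one_iff_deriv]
    exact ⟨fun x => (hD x).differentiableAt, by rw [hderiv]; exact vcont.neg⟩
  · -- the decay bound
    intro i x hx
    show C - (∫ t in (0 : ℝ)..x, v t) < ((α i : ℝ))⁻¹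
    rw [key x]
    set A : ℝ := (α i : ℝ) with hA
    have hA1 : (1 : ℝ) ≤ A := by rw [hA]; exact_mod_cast (α i).pos
    have hA0 : (0 : ℝ) < A := lt_of_lt_of_le one_pos hA1
    have h1 : (∫ t in Ioi x, v t) ≤ ∫ t in Ioi ((i : ℝ) - 1), v t :=
      setIntegral_mono_set (vint _) (ae_of_all _ (fun t => pcdV_nonneg α t))
        (HasSubset.Subset.eventuallyLE (Ioi_subset_Ioi hx))
    have hmajint : IntegrableOn (fun t => Real.exp 1 / (6 * A) * Real.exp (-t))
        (Ioi ((i : ℝ) - 1)) := by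
      simpa [IntegrableOn] using (exp_neg_integrableOn_Ioi ((i : ℝ) - 1) one_pos).const_mul
        (Real.exp 1 / (6 * A))
    have h2 : (∫ t in Ioi ((i : ℝ) - 1), v t)
        ≤ ∫ t in Ioi ((i : ℝ) - 1), Real.exp 1 / (6 * A) * Real.exp (-t) := by
      apply setIntegral_mono_on (vint _) hmajint measurableSet_Ioi
      intro t ht
      apply pcdV_le α t A hA1
      intro m hm
      have hit : (i : ℝ) - 1 < t := ht
      have : ((i : ℕ) : ℝ) < (m : ℝ) + 2 := by
        push_cast
        linarith
      have hin : (i : ℕ) ≤ m + 1 := by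
        have : (i : ℕ) < m + 2 := by exact_mod_cast this
        omega
      rw [hA]
      exact_mod_cast pcdA_ge α i (m + 1) hin
    have h3 : (∫ t in Ioi ((i : ℝ) - 1), Real.exp 1 / (6 * A) * Real.exp (-t))
        = Real.exp 1 / (6 * A) * Real.exp (-((i : ℝ) - 1)) := by
      rw [MeasureTheory.integral_const_mul, integral_exp_neg_Ioi]
    have h4 : Real.exp 1 / (6 * A) * Real.exp (-((i : ℝ) - 1)) < A⁻¹ := by
      have e1 : Real.exp (-((i : ℝ) - 1)) ≤ 1 := by
        rw [Real.exp_le_one_iff]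
        have : (1 : ℝ) ≤ (i : ℝ) := by exact_mod_cast i.one_le
        linarith
      have e2 : Real.exp 1 < 3 := by
        have := Real.exp_one_lt_d9
        linarith
      rw [div_mul_eq_mul_div, div_lt_iff₀ (by positivity)]
      have hE : (0 : ℝ) < Real.exp (-((i : ℝ) - 1)) := Real.exp_pos _
      have : A⁻¹ * (6 * A) = 6 := by field_simp
      rw [this]
      nlinarith
    calc (∫ t in Ioi x, v t) ≤ _ := h1
      _ ≤ _ := h2
      _ = _ := h3
      _ < A⁻¹ := h4
end

section
/- Let X be a locally compact Hausdorff space which is a countable union of compact sets, Y a locally compact Hausdorff space, Z the one-point (Alexandroff) compactification of Y, and ι : X×Y → X×Z the inclusion map. If ψ is a Radon measure over X×Y such that ψ(K×Y) < ∞ for every compact set K ⊆ X, then the pushforward ι_#ψ, defined by (ι_#ψ)(A) = ψ(ι⁻¹[A]) for A ⊆ X×Z, is a Radon measure over X×Z. -/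
open MeasureTheory Topology ENNReal

noncomputable section

/-- Let `X` be a locally compact Hausdorff space which is a countable
union of compact sets (σ-compact), `Y` a locally compact Hausdorff space, `Z` the
one-point compactification of `Y`, and `ι : X × Y → X × Z` the inclusion.  If `ψ` is a
Radon measure over `X × Y` with `ψ (K ×ˢ univ) < ∞` for every compact `K ⊆ X`, then the
pushforward `ι_# ψ` is a Radon measure over `X × Z`. -/
theorem pushforward_onePoint_radon
    (X Y : Type*) [TopologicalSpace X] [LocallyCompactSpace X] [T2Space X]
    [SigmaCompactSpace X] [MeasurableSpace X] [BorelSpace X]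
    [TopologicalSpace Y] [LocallyCompactSpace Y] [T2Space Y]
    [MeasurableSpace Y] [BorelSpace Y]
    [MeasurableSpace (OnePoint Y)] [BorelSpace (OnePoint Y)]
    (ψ : Measure (X × Y)) (hψ : ψ.Regular)
    (hfin : ∀ K : Set X, IsCompact K → ψ (K ×ˢ (Set.univ : Set Y)) < ⊤) :
    (ψ.map (fun p : X × Y => (p.1, (p.2 : OnePoint Y)))).Regular := by
  haveI := hψ
  set ι : X × Y → X × OnePoint Y := fun p => (p.1, (p.2 : OnePoint Y)) with hιdef
  have hcoe : IsOpenEmbedding ((↑) : Y → OnePoint Y) := OnePoint.isOpenEmbedding_coe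
  have hme : MeasurableEmbedding ι :=
    MeasurableEmbedding.prodMap MeasurableEmbedding.id hcoe.measurableEmbedding
  have hcont : Continuous ι := continuous_id.prodMap hcoe.continuous
  have hopenmap : IsOpenMap ι := IsOpenMap.id.prodMap hcoe.isOpenMap
  have hmap : ∀ s : Set (X × OnePoint Y), (ψ.map ι) s = ψ (ι ⁻¹' s) :=
    fun s => hme.map_apply ψ s
  -- finiteness on compacts
  haveI hfc : IsFiniteMeasureOnCompacts (ψ.map ι) := by
    constructor
    intro K hK
    rw [hmap]
    refine lt_of_le_of_lt (measure_mono ?_) (hfin (Prod.fst '' K) (hK.image continuous_fst))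
    rintro ⟨x, y⟩ h
    exact ⟨⟨(x, (y : OnePoint Y)), h, rfl⟩, trivial⟩
  -- key lemma: small measure complements of compact cylinders
  have key : ∀ K : Set X, IsCompact K → ∀ ε : ℝ≥0∞, ε ≠ 0 →
      ∃ C : Set Y, IsCompact C ∧ ψ (K ×ˢ Cᶜ) < ε := by
    intro K hK ε hε
    have hSmeas : MeasurableSet (K ×ˢ (Set.univ : Set Y)) :=
      hK.isClosed.measurableSet.prod MeasurableSet.univ
    obtain ⟨L, hLsub, hLc, hL⟩ := hSmeas.exists_isCompact_lt_add (hfin K hK).ne hε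
    set C : Set Y := Prod.snd '' L with hCdef
    have hCc : IsCompact C := hLc.image continuous_snd
    refine ⟨C, hCc, ?_⟩
    have hCK : MeasurableSet (K ×ˢ C) :=
      hK.isClosed.measurableSet.prod hCc.isClosed.measurableSet
    have hsub : K ×ˢ C ⊆ K ×ˢ (Set.univ : Set Y) :=
      Set.prod_mono subset_rfl (Set.subset_univ _)
    have hfin' : ψ (K ×ˢ C) ≠ ⊤ := ((measure_mono hsub).trans_lt (hfin K hK)).ne
    have hlt : ψ (K ×ˢ (Set.univ : Set Y)) < ψ (K ×ˢ C) + ε := by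
      refine hL.trans_le (add_le_add_left (measure_mono ?_) ε)
      rintro ⟨x, y⟩ hxy
      exact ⟨(hLsub hxy).1, ⟨(x, y), hxy, rfl⟩⟩
    have hdiff := measure_diff_lt_of_lt_add hCK.nullMeasurableSet hsub hfin' hlt
    refine lt_of_le_of_lt (measure_mono ?_) hdiff
    rintro ⟨x, y⟩ ⟨hx, hy⟩
    exact ⟨⟨hx, trivial⟩, fun h => hy h.2⟩
  -- outer regularity
  haveI hor : (ψ.map ι).OuterRegular := by
    constructor
    intro A hA r hr
    rw [hmap] at hr
    obtain ⟨r', hr1, hr2⟩ := exists_between hr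
    obtain ⟨V, hBV, hVopen, hV⟩ := (ι ⁻¹' A).exists_isOpen_lt_of_lt r' hr1
    obtain ⟨δ, hδpos, hδsum⟩ :=
      ENNReal.exists_pos_sum_of_countable' (tsub_pos_of_lt hr2).ne' ℕ
    let Kex := CompactExhaustion.choice X
    choose C hCcomp hCψ using fun n =>
      key (Kex (n + 1)) (Kex.isCompact _) (δ n) (hδpos n).ne'
    set W : Set (X × OnePoint Y) :=
      ⋃ n, interior (Kex (n + 1)) ×ˢ (((↑) '' C n : Set (OnePoint Y))ᶜ) with hWdef
    have hWopen : IsOpen W :=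
      isOpen_iUnion fun n => isOpen_interior.prod
        (((hCcomp n).image hcoe.continuous).isClosed.isOpen_compl)
    have hWinf : ∀ x : X, (x, (OnePoint.infty : OnePoint Y)) ∈ W := by
      intro x
      obtain ⟨n, hn⟩ := Kex.exists_mem x
      refine Set.mem_iUnion.2 ⟨n, Kex.subset_interior_succ n hn, ?_⟩
      rintro ⟨y, -, h⟩
      exact OnePoint.coe_ne_infty y h
    have hWmeas : ψ (ι ⁻¹' W) < r - r' := by
      calc ψ (ι ⁻¹' W)
          ≤ ∑' n, ψ (ι ⁻¹' (interior (Kex (n + 1)) ×ˢ (((↑) '' C n : Set (OnePoint Y))ᶜ))) := by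
            rw [hWdef, Set.preimage_iUnion]; exact measure_iUnion_le _
        _ ≤ ∑' n, ψ ((Kex (n + 1) : Set X) ×ˢ (C n)ᶜ) := by
            refine ENNReal.tsum_le_tsum fun n => measure_mono ?_
            rintro ⟨x, y⟩ ⟨hx, hy⟩
            exact ⟨interior_subset hx, fun h => hy ⟨y, h, rfl⟩⟩
        _ ≤ ∑' n, δ n := ENNReal.tsum_le_tsum fun n => (hCψ n).le
        _ < r - r' := hδsum
    refine ⟨ι '' V ∪ W, ?_, (hopenmap V hVopen).union hWopen, ?_⟩
    · rintro ⟨x, z⟩ hz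
      induction z using OnePoint.rec with
      | infty => exact Set.mem_union_right _ (hWinf x)
      | coe y => exact Set.mem_union_left _ ⟨(x, y), hBV hz, rfl⟩
    · rw [hmap]
      calc ψ (ι ⁻¹' (ι '' V ∪ W))
          ≤ ψ (ι ⁻¹' (ι '' V)) + ψ (ι ⁻¹' W) := by
            rw [Set.preimage_union]; exact measure_union_le _ _
        _ = ψ V + ψ (ι ⁻¹' W) := by rw [hme.injective.preimage_image]
        _ < r' + (r - r') := ENNReal.add_lt_add hV hWmeas
        _ ≤ r := by rw [add_tsub_cancel_of_le hr2.le]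
  -- inner regularity on open sets
  refine ⟨fun {U} hU r hr => ?_⟩
  rw [hmap] at hr
  obtain ⟨L, hLU, hLc, hLr⟩ := hψ.innerRegular (hU.preimage hcont) r hr
  refine ⟨ι '' L, Set.image_subset_iff.2 hLU, hLc.image hcont, ?_⟩
  rw [hmap]
  exact hLr.trans_le (measure_mono (Set.subset_preimage_image _ _))

end
end

section
/- Let X and Y be second-countable locally compact Hausdorff spaces, p : X×Y → X the projection, and Γ_i a sequence of Radon measures over X×Y such that (a) sup_i Γ_i(K×Y) < ∞ for every compact K ⊆ X, and (b) for every compact K ⊆ X and every ε > 0 there exists a compact set L ⊆ Y with Γ_i(K×(Y∖L)) ≤ ε for all i. Then there exist a subsequence Γ_{i_k} and a Radon measure Γ over X×Y with Γ(K×Y) < ∞ for every compact K ⊆ X such that ∫ φ dΓ_{i_k} → ∫ φ dΓ for every continuous φ : X×Y → ℝ with compact support; moreover, the pushforward p_#Γ is a Radon measure over X and ∫ g d(p_#Γ_{i_k}) → ∫ g d(p_#Γ) for every continuous g : X → ℝ with compact support. -/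
open MeasureTheory Topology Filter

noncomputable section

section GMCAux

open Set TopologicalSpace
open scoped ENNReal NNReal

set_option linter.unusedSectionVars false
set_option linter.unusedVariables false




namespace GMC

variable {Z : Type*} [TopologicalSpace Z] [LocallyCompactSpace Z] [T2Space Z]

/-- Bump function: 1 on compact K, 0 outside open U. -/
lemma exists_bump {K U : Set Z} (hK : IsCompact K) (hU : IsOpen U) (hKU : K ⊆ U) :
    ∃ f : Z → ℝ, Continuous f ∧ HasCompactSupport f ∧ Set.EqOn f 1 K ∧
      (∀ x ∉ U, f x = 0) ∧ ∀ x, f x ∈ Set.Icc (0:ℝ) 1 := by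
  obtain ⟨f, h1, h0, hcs, h01⟩ := exists_continuous_one_zero_of_isCompact hK
    hU.isClosed_compl (disjoint_compl_right_iff_subset.2 hKU)
  exact ⟨f, f.continuous, hcs, h1, fun x hx => h0 hx, h01⟩

/-- A positive linear functional on compactly supported continuous functions. -/
structure IsPosLinear (Λ : (Z → ℝ) → ℝ) : Prop where
  add : ∀ ⦃f g : Z → ℝ⦄, Continuous f → HasCompactSupport f → Continuous g →
    HasCompactSupport g → Λ (f + g) = Λ f + Λ g
  smul : ∀ (c : ℝ) ⦃f : Z → ℝ⦄, Continuous f → HasCompactSupport f → Λ (c • f) = c * Λ f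
  mono : ∀ ⦃f g : Z → ℝ⦄, Continuous f → HasCompactSupport f → Continuous g →
    HasCompactSupport g → (∀ x, f x ≤ g x) → Λ f ≤ Λ g

variable {Λ : (Z → ℝ) → ℝ}

lemma IsPosLinear.zero (hΛ : IsPosLinear Λ) : Λ 0 = 0 := by
  have h := hΛ.smul 0 continuous_const HasCompactSupport.zero (f := 0)
  simpa using h

lemma IsPosLinear.nonneg (hΛ : IsPosLinear Λ) {f : Z → ℝ} (hf : Continuous f)
    (hcs : HasCompactSupport f) (h0 : ∀ x, 0 ≤ f x) : 0 ≤ Λ f := by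
  have := hΛ.mono continuous_const HasCompactSupport.zero hf hcs (f := 0) h0
  simpa [hΛ.zero] using this

/-- Test functions for a set `K` : nonnegative compactly supported continuous functions
which are at least `1` on `K`. -/
def FK (K : Set Z) : Set (Z → ℝ) :=
  {f | Continuous f ∧ HasCompactSupport f ∧ (∀ x, 0 ≤ f x) ∧ ∀ x ∈ K, 1 ≤ f x}

lemma FK_nonempty {K : Set Z} (hK : IsCompact K) : (FK K).Nonempty := by
  obtain ⟨f, hf, hcs, h1, -, h01⟩ := exists_bump hK isOpen_univ (Set.subset_univ K)
  exact ⟨f, hf, hcs, fun x => (h01 x).1, fun x hx => (h1 hx).ge⟩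

/-- The content associated to a positive linear functional, as a real number. -/
def lamR (Λ : (Z → ℝ) → ℝ) (K : Set Z) : ℝ := sInf (Λ '' FK K)

lemma bddBelow_lam (hΛ : IsPosLinear Λ) (K : Set Z) : BddBelow (Λ '' FK K) := by
  refine ⟨0, ?_⟩
  rintro b ⟨f, ⟨hf, hcs, h0, -⟩, rfl⟩
  exact hΛ.nonneg hf hcs h0

lemma lamR_nonneg (hΛ : IsPosLinear Λ) (K : Set Z) : 0 ≤ lamR Λ K := by
  rcases (Λ '' FK K).eq_empty_or_nonempty with h | h
  · simp [lamR, h, Real.sInf_empty]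
  · exact le_csInf h (by rintro b ⟨f, ⟨hf, hcs, h0, -⟩, rfl⟩; exact hΛ.nonneg hf hcs h0)

lemma lamR_le (hΛ : IsPosLinear Λ) {K : Set Z} {f : Z → ℝ} (hf : f ∈ FK K) :
    lamR Λ K ≤ Λ f :=
  csInf_le (bddBelow_lam hΛ K) ⟨f, hf, rfl⟩

lemma lamR_mono (hΛ : IsPosLinear Λ) {K₁ K₂ : Set Z} (hK₂ : IsCompact K₂) (h : K₁ ⊆ K₂) :
    lamR Λ K₁ ≤ lamR Λ K₂ := by
  refine le_csInf ((FK_nonempty hK₂).image Λ) ?_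
  rintro b ⟨f, hf, rfl⟩
  exact lamR_le hΛ ⟨hf.1, hf.2.1, hf.2.2.1, fun x hx => hf.2.2.2 x (h hx)⟩

lemma le_lamR (hΛ : IsPosLinear Λ) {K : Set Z} {c : ℝ} (hK : IsCompact K)
    (h : ∀ f ∈ FK K, c ≤ Λ f) : c ≤ lamR Λ K :=
  le_csInf ((FK_nonempty hK).image Λ) (by rintro b ⟨f, hf, rfl⟩; exact h f hf)

/-- If `0 ≤ f ≤ 1` then `Λ f ≤ lamR (tsupport f)`. -/
lemma lam_le_lamR_tsupport (hΛ : IsPosLinear Λ) {f : Z → ℝ} (hf : Continuous f)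
    (hcs : HasCompactSupport f) (h01 : ∀ x, f x ∈ Set.Icc (0:ℝ) 1) :
    Λ f ≤ lamR Λ (tsupport f) := by
  refine le_csInf ((FK_nonempty hcs).image Λ) ?_
  rintro b ⟨h, ⟨hh, hhcs, hh0, hh1⟩, rfl⟩
  refine hΛ.mono hf hcs hh hhcs fun x => ?_
  by_cases hx : x ∈ tsupport f
  · exact (h01 x).2.trans (hh1 x hx)
  · simp [image_eq_zero_of_notMem_tsupport hx, hh0 x]

end GMC

set_option linter.unusedSectionVars false
set_option linter.unusedVariables false

namespace GMC

variable {Z : Type*} [TopologicalSpace Z] [LocallyCompactSpace Z] [T2Space Z]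
variable {Λ : (Z → ℝ) → ℝ}

open TopologicalSpace

lemma lamR_union_le (hΛ : IsPosLinear Λ) (K₁ K₂ : Compacts Z) :
    lamR Λ (↑(K₁ ⊔ K₂)) ≤ lamR Λ K₁ + lamR Λ K₂ := by
  have H : ∀ f₁ ∈ FK (K₁ : Set Z), ∀ f₂ ∈ FK (K₂ : Set Z),
      lamR Λ (↑(K₁ ⊔ K₂)) ≤ Λ f₁ + Λ f₂ := by
    rintro f₁ ⟨hc₁, hcs₁, h0₁, h1₁⟩ f₂ ⟨hc₂, hcs₂, h0₂, h1₂⟩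
    have hmem : f₁ + f₂ ∈ FK (↑(K₁ ⊔ K₂) : Set Z) := by
      refine ⟨hc₁.add hc₂, hcs₁.add hcs₂, fun x => add_nonneg (h0₁ x) (h0₂ x), fun x hx => ?_⟩
      rcases hx with hx | hx
      · have := h1₁ x hx; have := h0₂ x
        simp only [Pi.add_apply]; linarith
      · have := h1₂ x hx; have := h0₁ x
        simp only [Pi.add_apply]; linarith
    calc lamR Λ (↑(K₁ ⊔ K₂)) ≤ Λ (f₁ + f₂) := lamR_le hΛ hmem
      _ = Λ f₁ + Λ f₂ := hΛ.add hc₁ hcs₁ hc₂ hcs₂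
  rw [← sub_le_iff_le_add']
  refine le_csInf ((FK_nonempty K₂.2).image Λ) ?_
  rintro b ⟨f₂, hf₂, rfl⟩
  rw [sub_le_comm]
  refine le_csInf ((FK_nonempty K₁.2).image Λ) ?_
  rintro b ⟨f₁, hf₁, rfl⟩
  rw [sub_le_iff_le_add']
  linarith [H f₁ hf₁ f₂ hf₂]

lemma le_lamR_union (hΛ : IsPosLinear Λ) (K₁ K₂ : Compacts Z)
    (hd : Disjoint (K₁ : Set Z) K₂) :
    lamR Λ K₁ + lamR Λ K₂ ≤ lamR Λ (↑(K₁ ⊔ K₂)) := by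
  obtain ⟨U₁, U₂, hU₁, hU₂, hKU₁, hKU₂, hUd⟩ := SeparatedNhds.of_isCompact_isCompact K₁.2 K₂.2 hd
  obtain ⟨h₁, hh₁c, hh₁cs, hh₁1, hh₁0, hh₁01⟩ := exists_bump K₁.2 hU₁ hKU₁
  obtain ⟨h₂, hh₂c, hh₂cs, hh₂1, hh₂0, hh₂01⟩ := exists_bump K₂.2 hU₂ hKU₂
  refine le_lamR hΛ (K₁.2.union K₂.2) ?_
  rintro f ⟨hf, hfcs, hf0, hf1⟩
  have hfh₁ : (fun x => f x * h₁ x) ∈ FK (K₁ : Set Z) := by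
    refine ⟨hf.mul hh₁c, HasCompactSupport.mul_left hh₁cs, fun x => mul_nonneg (hf0 x) (hh₁01 x).1,
      fun x hx => ?_⟩
    show 1 ≤ f x * h₁ x
    rw [hh₁1 hx]
    simpa using hf1 x (Set.mem_union_left _ hx)
  have hfh₂ : (fun x => f x * h₂ x) ∈ FK (K₂ : Set Z) := by
    refine ⟨hf.mul hh₂c, HasCompactSupport.mul_left hh₂cs, fun x => mul_nonneg (hf0 x) (hh₂01 x).1,
      fun x hx => ?_⟩
    show 1 ≤ f x * h₂ x
    rw [hh₂1 hx]
    simpa using hf1 x (Set.mem_union_right _ hx)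
  have key : Λ (fun x => f x * h₁ x) + Λ (fun x => f x * h₂ x) ≤ Λ f := by
    have hadd := hΛ.add (f := fun x => f x * h₁ x) (g := fun x => f x * h₂ x)
      (hf.mul hh₁c) (HasCompactSupport.mul_left hh₁cs) (hf.mul hh₂c)
      (HasCompactSupport.mul_left hh₂cs)
    rw [← hadd]
    refine hΛ.mono ((hf.mul hh₁c).add (hf.mul hh₂c))
      ((HasCompactSupport.mul_left hh₁cs).add (HasCompactSupport.mul_left hh₂cs)) hf hfcs
      fun x => ?_
    have hle : h₁ x + h₂ x ≤ 1 := by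
      by_cases hx : x ∈ U₁
      · have : h₂ x = 0 := hh₂0 x fun hx2 => (Set.disjoint_left.1 hUd hx) hx2
        rw [this, add_zero]; exact (hh₁01 x).2
      · rw [hh₁0 x hx, zero_add]; exact (hh₂01 x).2
    calc (fun x => f x * h₁ x) x + (fun x => f x * h₂ x) x = f x * (h₁ x + h₂ x) := by
          simp only [Pi.add_apply]; ring
      _ ≤ f x * 1 := mul_le_mul_of_nonneg_left hle (hf0 x)
      _ = f x := mul_one _
  calc lamR Λ K₁ + lamR Λ K₂ ≤ Λ (fun x => f x * h₁ x) + Λ (fun x => f x * h₂ x) :=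
        add_le_add (lamR_le hΛ hfh₁) (lamR_le hΛ hfh₂)
    _ ≤ Λ f := key

/-- The content associated to a positive linear functional. -/
def content (hΛ : IsPosLinear Λ) : MeasureTheory.Content Z where
  toFun K := (lamR Λ K).toNNReal
  mono' K₁ K₂ h := Real.toNNReal_mono (lamR_mono hΛ K₂.2 h)
  sup_disjoint' K₁ K₂ hd _ _ := by
    rw [← Real.toNNReal_add (lamR_nonneg hΛ _) (lamR_nonneg hΛ _)]
    exact congrArg Real.toNNReal (le_antisymm (lamR_union_le hΛ K₁ K₂)
      ((le_lamR_union hΛ K₁ K₂ hd)))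
  sup_le' K₁ K₂ := by
    rw [← Real.toNNReal_add (lamR_nonneg hΛ _) (lamR_nonneg hΛ _)]
    exact Real.toNNReal_mono (lamR_union_le hΛ K₁ K₂)

end GMC

namespace GMC

variable {Z : Type*} [TopologicalSpace Z] [LocallyCompactSpace Z] [T2Space Z]
  [MeasurableSpace Z] [BorelSpace Z]
variable {Λ : (Z → ℝ) → ℝ}

/-- The Riesz–Markov measure associated to a positive linear functional. -/
def rmkMeasure (hΛ : IsPosLinear Λ) : Measure Z := (content hΛ).measure

lemma rmkMeasure_regular (hΛ : IsPosLinear Λ) : (rmkMeasure hΛ).Regular := by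
  unfold rmkMeasure; infer_instance

lemma rmkMeasure_apply (hΛ : IsPosLinear Λ) {s : Set Z} (hs : MeasurableSet s) :
    rmkMeasure hΛ s = (content hΛ).outerMeasure s :=
  MeasureTheory.Content.measure_apply _ hs

lemma ofReal_lamR_le_rmkMeasure (hΛ : IsPosLinear Λ) (C : Compacts Z) :
    ENNReal.ofReal (lamR Λ C) ≤ rmkMeasure hΛ C := by
  rw [rmkMeasure_apply hΛ (s := (C : Set Z)) C.2.isClosed.measurableSet,
    MeasureTheory.Content.outerMeasure_eq_iInf]
  refine le_iInf fun U => le_iInf fun hU => le_iInf fun hCU => ?_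
  exact (content hΛ).le_innerContent C ⟨U, hU⟩ hCU

lemma lamR_le_rmkMeasure_toReal (hΛ : IsPosLinear Λ) (C : Compacts Z) :
    lamR Λ C ≤ ((rmkMeasure hΛ) C).toReal := by
  haveI := rmkMeasure_regular hΛ
  have h1 := ofReal_lamR_le_rmkMeasure hΛ C
  have h2 : (rmkMeasure hΛ) C ≠ ⊤ := (C.2.measure_lt_top).ne
  calc lamR Λ C = (ENNReal.ofReal (lamR Λ C)).toReal := by
        rw [ENNReal.toReal_ofReal (lamR_nonneg hΛ _)]
    _ ≤ ((rmkMeasure hΛ) C).toReal := ENNReal.toReal_mono h2 h1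

/-- Any `0 ≤ f ≤ 1` test function: `Λ f ≤ ν C` for compact `C ⊇ tsupport f`. -/
lemma lam_le_rmkMeasure (hΛ : IsPosLinear Λ) {f : Z → ℝ} (hf : Continuous f)
    (hcs : HasCompactSupport f) (h01 : ∀ x, f x ∈ Set.Icc (0:ℝ) 1) {C : Set Z}
    (hC : IsCompact C) (hsub : tsupport f ⊆ C) :
    Λ f ≤ ((rmkMeasure hΛ) C).toReal := by
  calc Λ f ≤ lamR Λ (tsupport f) := lam_le_lamR_tsupport hΛ hf hcs h01
    _ ≤ lamR Λ C := lamR_mono hΛ hC hsub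
    _ ≤ ((rmkMeasure hΛ) C).toReal := lamR_le_rmkMeasure_toReal hΛ ⟨C, hC⟩

/-- Upper bound on the measure of an open set by the functional. -/
lemma rmkMeasure_open_le (hΛ : IsPosLinear Λ) {U : Set Z} (hU : IsOpen U) {r : ℝ≥0∞}
    (hr : ∀ f : Z → ℝ, Continuous f → HasCompactSupport f → (∀ x, f x ∈ Set.Icc (0:ℝ) 1) →
      (∀ x ∉ U, f x = 0) → ENNReal.ofReal (Λ f) ≤ r) :
    rmkMeasure hΛ U ≤ r := by
  rw [rmkMeasure_apply hΛ hU.measurableSet,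
    MeasureTheory.Content.outerMeasure_of_isOpen _ U hU]
  refine iSup₂_le fun C hCU => ?_
  obtain ⟨f, hfc, hfcs, hf1, hf0, hf01⟩ := exists_bump C.2 hU hCU
  have hmem : f ∈ FK (C : Set Z) := ⟨hfc, hfcs, fun x => (hf01 x).1, fun x hx => (hf1 hx).ge⟩
  calc ((content hΛ) C : ℝ≥0∞) = ENNReal.ofReal (lamR Λ C) := rfl
    _ ≤ ENNReal.ofReal (Λ f) := ENNReal.ofReal_le_ofReal (lamR_le hΛ hmem)
    _ ≤ r := hr f hfc hfcs hf01 hf0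

/-- Lower bound: measure of compact set is at most `Λ h` for `h ∈ FK C`. -/
lemma rmkMeasure_compact_le (hΛ : IsPosLinear Λ) {C : Set Z} (hC : IsCompact C)
    {h : Z → ℝ} (hmem : h ∈ FK C) : rmkMeasure hΛ C ≤ ENNReal.ofReal (Λ h) := by
  obtain ⟨hhc, hhcs, hh0, hh1⟩ := hmem
  have key : ∀ t : ℝ, 0 < t → t < 1 → rmkMeasure hΛ C ≤ ENNReal.ofReal (t⁻¹ * Λ h) := by
    intro t ht0 ht1
    have hUopen : IsOpen {x | t < h x} := isOpen_lt continuous_const hhc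
    have hCU : C ⊆ {x | t < h x} := fun x hx => lt_of_lt_of_le ht1 (hh1 x hx)
    have step : rmkMeasure hΛ {x | t < h x} ≤ ENNReal.ofReal (t⁻¹ * Λ h) := by
      rw [rmkMeasure_apply hΛ hUopen.measurableSet,
        MeasureTheory.Content.outerMeasure_of_isOpen _ _ hUopen]
      refine iSup₂_le fun K' hK'U => ?_
      have hmem' : t⁻¹ • h ∈ FK (K' : Set Z) := by
        have hcont : Continuous (t⁻¹ • h) := (continuous_const.mul hhc : Continuous fun x => t⁻¹ * h x)
        refine ⟨hcont, hhcs.smul_left, fun x => ?_, fun x hx => ?_⟩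
        · exact mul_nonneg (inv_nonneg.2 ht0.le) (hh0 x)
        · have hx' : t < h x := hK'U hx
          have h2 : t⁻¹ * t ≤ t⁻¹ * h x :=
            mul_le_mul_of_nonneg_left hx'.le (inv_nonneg.2 ht0.le)
          rw [inv_mul_cancel₀ ht0.ne'] at h2
          exact h2
      calc ((content hΛ) K' : ℝ≥0∞) = ENNReal.ofReal (lamR Λ K') := rfl
        _ ≤ ENNReal.ofReal (Λ (t⁻¹ • h)) := ENNReal.ofReal_le_ofReal (lamR_le hΛ hmem')
        _ = ENNReal.ofReal (t⁻¹ * Λ h) := by rw [hΛ.smul _ hhc hhcs]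
    exact (measure_mono hCU).trans step
  have htend : Filter.Tendsto (fun n : ℕ => ENNReal.ofReal ((1 - 1/(n+2 : ℝ))⁻¹ * Λ h))
      Filter.atTop (nhds (ENNReal.ofReal (Λ h))) := by
    have hnat : Filter.Tendsto (fun n : ℕ => (n : ℝ) + 2) Filter.atTop Filter.atTop :=
      Filter.tendsto_atTop_add_const_right _ _ tendsto_natCast_atTop_atTop
    have h0 : Filter.Tendsto (fun n : ℕ => 1/(n+2 : ℝ)) Filter.atTop (nhds 0) := by
      have := hnat.inv_tendsto_atTop; simp only [one_div]; exact this
    have h2 : Filter.Tendsto (fun n : ℕ => (1 - 1/(n+2 : ℝ))) Filter.atTop (nhds 1) := by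
      simpa using (tendsto_const_nhds (x := (1:ℝ)) (f := Filter.atTop (α := ℕ))).sub h0
    have h3 := (h2.inv₀ (by norm_num)).mul_const (Λ h)
    rw [inv_one, one_mul] at h3
    exact (ENNReal.continuous_ofReal.tendsto _).comp h3
  refine ge_of_tendsto' htend fun n => ?_
  have hpos : 0 < 1/(n+2 : ℝ) := by positivity
  have hlt : 1/(n+2 : ℝ) < 1 := by
    rw [div_lt_one (by positivity)]
    have : (0:ℝ) ≤ n := Nat.cast_nonneg n
    linarith
  exact key _ (by linarith) (by linarith)

end GMC

namespace GMC

variable {Z : Type*} [TopologicalSpace Z] [LocallyCompactSpace Z] [T2Space Z]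
  [MeasurableSpace Z] [BorelSpace Z]
variable {Λ : (Z → ℝ) → ℝ}

lemma hcs_finsetSum {n : ℕ} {g : ℕ → Z → ℝ} (hcs : ∀ j, HasCompactSupport (g j)) :
    HasCompactSupport (fun x => ∑ j ∈ Finset.range n, g j x) := by
  induction n with
  | zero => simpa [Pi.zero_def] using HasCompactSupport.zero
  | succ n ih =>
      have : (fun x => ∑ j ∈ Finset.range (n+1), g j x)
          = (fun x => ∑ j ∈ Finset.range n, g j x) + g n := by
        funext x; simp [Finset.sum_range_succ]
      rw [this]
      exact ih.add (hcs n)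

lemma IsPosLinear.map_sum (hΛ : IsPosLinear Λ) {n : ℕ} {g : ℕ → Z → ℝ}
    (hc : ∀ j, Continuous (g j)) (hcs : ∀ j, HasCompactSupport (g j)) :
    Λ (fun x => ∑ j ∈ Finset.range n, g j x) = ∑ j ∈ Finset.range n, Λ (g j) := by
  induction n with
  | zero => simpa [Pi.zero_def] using hΛ.zero
  | succ n ih =>
      have he : (fun x => ∑ j ∈ Finset.range (n+1), g j x)
          = (fun x => ∑ j ∈ Finset.range n, g j x) + g n := by
        funext x; simp [Finset.sum_range_succ]
      rw [he, hΛ.add (by fun_prop) (hcs_finsetSum hcs) (hc n) (hcs n), ih,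
        Finset.sum_range_succ]

set_option maxHeartbeats 1000000 in
/-- The Riesz representation property, for nonnegative functions. -/
lemma rmk_integral_nonneg (hΛ : IsPosLinear Λ) {f : Z → ℝ} (hf : Continuous f)
    (hcs : HasCompactSupport f) (h0 : ∀ x, 0 ≤ f x) :
    ∫ x, f x ∂(rmkMeasure hΛ) = Λ f := by
  haveI hreg := rmkMeasure_regular hΛ
  set ν := rmkMeasure hΛ with hν
  set S := tsupport f with hSdef
  have hS : IsCompact S := hcs
  have hνS : ν S < ⊤ := hS.measure_lt_top
  obtain ⟨Cf, hCf⟩ := hcs.exists_bound_of_continuous hf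
  -- main estimate for each N
  have main : ∀ N : ℕ, 0 < N → |Λ f - ∫ x, f x ∂ν| ≤ (ν S).toReal * (N : ℝ)⁻¹ := by
    intro N hN
    set δ : ℝ := (N : ℝ)⁻¹ with hδdef
    have hδ : 0 < δ := by positivity
    have hNδ : (N : ℝ) * δ = 1 := mul_inv_cancel₀ (by positivity)
    set fj : ℕ → Z → ℝ := fun j x => min (max (f x - j * δ) 0) δ with hfjdef
    set B : ℕ → Set Z := fun j => {x | (j : ℝ) * δ ≤ f x} ∩ S with hBdef
    have hBclosed : ∀ j, IsClosed (B j) :=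
      fun j => (isClosed_le continuous_const hf).inter (isClosed_tsupport f)
    have hBcompact : ∀ j, IsCompact (B j) :=
      fun j => hS.of_isClosed_subset (hBclosed j) Set.inter_subset_right
    have hBm : ∀ j, MeasurableSet (B j) := fun j => (hBclosed j).measurableSet
    have hBmono : ∀ j, B (j+1) ⊆ B j := by
      rintro j x ⟨hx1, hx2⟩
      have hx1' : ((j:ℝ)+1) * δ ≤ f x := by exact_mod_cast hx1
      refine ⟨?_, hx2⟩
      show (j:ℝ) * δ ≤ f x
      nlinarith [hδ.le]
    have hfjc : ∀ j, Continuous (fj j) := by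
      intro j; exact ((hf.sub continuous_const).max continuous_const).min continuous_const
    have hfj_eq_zero : ∀ (j : ℕ) (x : Z), f x ≤ j * δ → fj j x = 0 := by
      intro j x hx
      have : max (f x - j * δ) 0 = 0 := max_eq_right (by linarith)
      rw [hfjdef]; simp only [this]
      exact min_eq_left hδ.le
    have hfjcs : ∀ j, HasCompactSupport (fj j) := by
      intro j
      refine HasCompactSupport.intro hS fun x hx => ?_
      have hfx : f x = 0 := image_eq_zero_of_notMem_tsupport hx
      exact hfj_eq_zero j x (by rw [hfx]; positivity)
    have hfj0 : ∀ j x, 0 ≤ fj j x := fun j x => le_min (le_max_right _ _) hδ.le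
    have hfjδ : ∀ j x, fj j x ≤ δ := fun j x => min_le_right _ _
    have hfj_int : ∀ j, Integrable (fj j) ν :=
      fun j => (hfjc j).integrable_of_hasCompactSupport (hfjcs j)
    have hmem_fj : ∀ j x, x ∈ B (j+1) → fj j x = δ := by
      rintro j x ⟨hx1, -⟩
      have hx1' : ((j:ℝ)+1) * δ ≤ f x := by exact_mod_cast hx1
      have h1 : δ ≤ f x - ↑j * δ := by nlinarith [hx1']
      have : max (f x - j * δ) 0 = f x - j * δ := max_eq_left (by linarith)
      rw [hfjdef]; simp only [this]
      exact min_eq_right h1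
    have hnotin : ∀ j x, x ∉ B j → fj j x = 0 := by
      intro j x hx
      by_cases hxS : x ∈ S
      · have : ¬ ((j : ℝ) * δ ≤ f x) := fun h => hx ⟨h, hxS⟩
        exact hfj_eq_zero j x (le_of_not_ge this)
      · have hfx : f x = 0 := image_eq_zero_of_notMem_tsupport hxS
        exact hfj_eq_zero j x (by rw [hfx]; positivity)
    -- choose M
    obtain ⟨M, hM⟩ := exists_nat_ge (Cf * N)
    have hCfM : Cf ≤ M * δ := by
      rw [hδdef, ← div_eq_mul_inv, le_div_iff₀ (by positivity)]
      linarith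
    have hsum : ∀ x, ∑ j ∈ Finset.range M, fj j x = min (f x) (M * δ) := by
      intro x
      have key : ∀ m : ℕ, ∑ j ∈ Finset.range m, fj j x = min (f x) (m * δ) := by
        intro m
        induction m with
        | zero => simp [min_eq_right (h0 x)]
        | succ m ih =>
            rw [Finset.sum_range_succ, ih]
            have hcast : ((m+1 : ℕ) : ℝ) * δ = ↑m * δ + δ := by push_cast; ring
            rw [hcast]
            rcases le_total (f x) (m * δ) with hc | hc
            · rw [min_eq_left hc, hfj_eq_zero m x hc, add_zero]
              exact (min_eq_left (by linarith)).symm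
            · rw [min_eq_right hc]
              have hfjm : fj m x = min (f x - m * δ) δ := by
                rw [hfjdef]; simp only [max_eq_left (by linarith : (0:ℝ) ≤ f x - m * δ)]
              rw [hfjm]
              rcases le_total (f x - m * δ) δ with h | h
              · rw [min_eq_left h, min_eq_left (by linarith)]
                ring
              · rw [min_eq_right h, min_eq_right (by linarith)]
      exact key M
    have hfsum : ∀ x, f x = ∑ j ∈ Finset.range M, fj j x := by
      intro x
      rw [hsum x, min_eq_left]
      calc f x ≤ |f x| := le_abs_self _
        _ ≤ Cf := by simpa using hCf x
        _ ≤ M * δ := hCfM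
    -- per-j bounds
    set b : ℕ → ℝ := fun j => (ν (B j)).toReal with hbdef
    have hb0 : ∀ j, 0 ≤ b j := fun j => ENNReal.toReal_nonneg
    have hbmono : ∀ j, b (j+1) ≤ b j := by
      intro j
      exact ENNReal.toReal_mono ((hBcompact j).measure_lt_top).ne (measure_mono (hBmono j))
    have hbS : b 0 ≤ (ν S).toReal :=
      ENNReal.toReal_mono hνS.ne (measure_mono Set.inter_subset_right)
    -- the scaled function u j
    have hu : ∀ j, ∃ u : Z → ℝ, u = (N : ℝ) • fj j ∧ Continuous u ∧ HasCompactSupport u ∧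
        (∀ x, u x ∈ Set.Icc (0:ℝ) 1) ∧ Λ u = N * Λ (fj j) ∧
        tsupport u ⊆ B j ∧ (∀ x ∈ B (j+1), 1 ≤ u x) := by
      intro j
      refine ⟨(N : ℝ) • fj j, rfl, (continuous_const.mul (hfjc j) :), (hfjcs j).smul_left,
        fun x => ⟨by simpa using mul_nonneg (Nat.cast_nonneg N : (0:ℝ) ≤ N) (hfj0 j x), ?_⟩,
        hΛ.smul _ (hfjc j) (hfjcs j), ?_, fun x hx => ?_⟩
      · calc ((N:ℝ) • fj j) x = N * fj j x := rfl
          _ ≤ N * δ := by nlinarith [hfjδ j x, Nat.cast_nonneg (α := ℝ) N]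
          _ = 1 := hNδ
      · refine closure_minimal ?_ (hBclosed j)
        intro x hx
        by_contra hxB
        have : fj j x = 0 := hnotin j x hxB
        simp only [Function.mem_support, Pi.smul_apply, this, smul_eq_mul, mul_zero] at hx
        exact hx rfl
      · have h := hmem_fj j x hx
        have he : ((N:ℝ) • fj j) x = 1 := by
          show (N:ℝ) * fj j x = 1
          rw [h]; exact hNδ
        exact he.ge
    have E1 : ∀ j, Λ (fj j) ≤ δ * b j := by
      intro j
      obtain ⟨u, -, huc, hucs, hu01, huΛ, husupp, -⟩ := hu j
      have h1 : Λ u ≤ b j := lam_le_rmkMeasure hΛ huc hucs hu01 (hBcompact j) husupp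
      rw [huΛ] at h1
      calc Λ (fj j) = δ * (N * Λ (fj j)) := by
            rw [hδdef]; field_simp
        _ ≤ δ * b j := by nlinarith [hδ.le]
    have E2 : ∀ j, δ * b (j+1) ≤ Λ (fj j) := by
      intro j
      obtain ⟨u, -, huc, hucs, hu01, huΛ, -, hu1⟩ := hu j
      have humem : u ∈ FK (B (j+1)) := ⟨huc, hucs, fun x => (hu01 x).1, hu1⟩
      have h1 : ν (B (j+1)) ≤ ENNReal.ofReal (Λ u) :=
        rmkMeasure_compact_le hΛ (hBcompact (j+1)) humem
      have hu0 : 0 ≤ Λ u := hΛ.nonneg huc hucs fun x => (hu01 x).1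
      have h2 : b (j+1) ≤ Λ u := by
        calc b (j+1) ≤ (ENNReal.ofReal (Λ u)).toReal :=
              ENNReal.toReal_mono ENNReal.ofReal_ne_top h1
          _ = Λ u := ENNReal.toReal_ofReal hu0
      rw [huΛ] at h2
      calc δ * b (j+1) ≤ δ * (N * Λ (fj j)) := by nlinarith [hδ.le]
        _ = Λ (fj j) := by rw [hδdef]; field_simp
    have hind_int : ∀ j, Integrable ((B j).indicator fun _ => δ) ν := by
      intro j
      rw [integrable_indicator_iff (hBm j)]
      exact integrableOn_const (hBcompact j).measure_lt_top.ne
    have E3 : ∀ j, ∫ x, fj j x ∂ν ≤ δ * b j := by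
      intro j
      have hle : ∀ x, fj j x ≤ (B j).indicator (fun _ => δ) x := by
        intro x
        by_cases hx : x ∈ B j
        · rw [Set.indicator_of_mem hx]; exact hfjδ j x
        · rw [Set.indicator_of_notMem hx, hnotin j x hx]
      calc ∫ x, fj j x ∂ν ≤ ∫ x, (B j).indicator (fun _ => δ) x ∂ν :=
            integral_mono (hfj_int j) (hind_int j) hle
        _ = (ν (B j)).toReal • δ := integral_indicator_const δ (hBm j)
        _ = δ * b j := by rw [hbdef]; simp [mul_comm]
    have E4 : ∀ j, δ * b (j+1) ≤ ∫ x, fj j x ∂ν := by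
      intro j
      have hle : ∀ x, (B (j+1)).indicator (fun _ => δ) x ≤ fj j x := by
        intro x
        by_cases hx : x ∈ B (j+1)
        · rw [Set.indicator_of_mem hx, hmem_fj j x hx]
        · rw [Set.indicator_of_notMem hx]; exact hfj0 j x
      calc δ * b (j+1) = (ν (B (j+1))).toReal • δ := by rw [hbdef]; simp [mul_comm]
        _ = ∫ x, (B (j+1)).indicator (fun _ => δ) x ∂ν :=
            (integral_indicator_const δ (hBm (j+1))).symm
        _ ≤ ∫ x, fj j x ∂ν := integral_mono (hind_int (j+1)) (hfj_int j) hle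
    -- sum up
    have hΛf : Λ f = ∑ j ∈ Finset.range M, Λ (fj j) := by
      rw [show f = fun x => ∑ j ∈ Finset.range M, fj j x from funext hfsum]
      exact hΛ.map_sum hfjc hfjcs
    have hint : ∫ x, f x ∂ν = ∑ j ∈ Finset.range M, ∫ x, fj j x ∂ν := by
      rw [show f = fun x => ∑ j ∈ Finset.range M, fj j x from funext hfsum]
      exact integral_finset_sum _ fun j _ => hfj_int j
    rw [hΛf, hint, ← Finset.sum_sub_distrib]
    calc |∑ j ∈ Finset.range M, (Λ (fj j) - ∫ x, fj j x ∂ν)|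
        ≤ ∑ j ∈ Finset.range M, |Λ (fj j) - ∫ x, fj j x ∂ν| :=
          Finset.abs_sum_le_sum_abs _ _
      _ ≤ ∑ j ∈ Finset.range M, (δ * b j - δ * b (j+1)) := by
          refine Finset.sum_le_sum fun j _ => abs_sub_le_iff.2 ⟨?_, ?_⟩
          · linarith [E1 j, E4 j]
          · linarith [E2 j, E3 j]
      _ = δ * b 0 - δ * b M := Finset.sum_range_sub' (fun j => δ * b j) M
      _ ≤ (ν S).toReal * δ := by nlinarith [hb0 M, hδ.le, hbS]
      _ = (ν S).toReal * (N:ℝ)⁻¹ := rfl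
  -- let N → ∞
  have htends : Filter.Tendsto (fun N : ℕ => (ν S).toReal * (N : ℝ)⁻¹) Filter.atTop (nhds 0) := by
    have h1 : Filter.Tendsto (fun N : ℕ => ((N:ℝ))⁻¹) Filter.atTop (nhds 0) :=
      tendsto_inv_atTop_zero.comp tendsto_natCast_atTop_atTop
    simpa using h1.const_mul (ν S).toReal
  have habs : |Λ f - ∫ x, f x ∂ν| ≤ 0 := by
    refine ge_of_tendsto htends ?_
    filter_upwards [Filter.eventually_ge_atTop 1] with N hN
    exact main N hN
  have : Λ f = ∫ x, f x ∂ν := by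
    have := abs_nonneg (Λ f - ∫ x, f x ∂ν)
    have h0' : |Λ f - ∫ x, f x ∂ν| = 0 := le_antisymm habs this
    have := abs_eq_zero.1 h0'
    linarith
  exact this.symm

end GMC

namespace GMC

variable {Z : Type*} [TopologicalSpace Z] [LocallyCompactSpace Z] [T2Space Z]
  [MeasurableSpace Z] [BorelSpace Z]
variable {Λ : (Z → ℝ) → ℝ}

/-- The Riesz representation property. -/
lemma rmk_integral (hΛ : IsPosLinear Λ) {f : Z → ℝ} (hf : Continuous f)
    (hcs : HasCompactSupport f) : ∫ x, f x ∂(rmkMeasure hΛ) = Λ f := by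
  haveI hreg := rmkMeasure_regular hΛ
  set fp : Z → ℝ := fun x => max (f x) 0 with hfp
  set fm : Z → ℝ := fun x => max (-f x) 0 with hfm
  have hfpc : Continuous fp := hf.max continuous_const
  have hfmc : Continuous fm := hf.neg.max continuous_const
  have hfpcs : HasCompactSupport fp := by
    refine HasCompactSupport.intro hcs fun x hx => ?_
    rw [hfp]; simp [image_eq_zero_of_notMem_tsupport hx]
  have hfmcs : HasCompactSupport fm := by
    refine HasCompactSupport.intro hcs fun x hx => ?_
    rw [hfm]; simp [image_eq_zero_of_notMem_tsupport hx]
  have heq : f + fm = fp := by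
    funext x
    simp only [Pi.add_apply, hfp, hfm]
    rcases le_total (f x) 0 with h | h
    · rw [max_eq_left (neg_nonneg.2 h), max_eq_right h]; ring
    · rw [max_eq_right (neg_nonpos.2 h), max_eq_left h]; ring
  have hΛeq : Λ f + Λ fm = Λ fp := by
    rw [← hΛ.add hf hcs hfmc hfmcs, heq]
  have hint : ∫ x, f x ∂(rmkMeasure hΛ) + ∫ x, fm x ∂(rmkMeasure hΛ)
      = ∫ x, fp x ∂(rmkMeasure hΛ) := by
    rw [show fp = f + fm from heq.symm]
    exact (integral_add (hf.integrable_of_hasCompactSupport hcs)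
      (hfmc.integrable_of_hasCompactSupport hfmcs)).symm
  have h1 := rmk_integral_nonneg hΛ hfpc hfpcs fun x => le_max_right _ _
  have h2 := rmk_integral_nonneg hΛ hfmc hfmcs fun x => le_max_right _ _
  linarith

/-- Bound on the integral of a compactly supported function vanishing outside `s`. -/
lemma abs_integral_le (μ : Measure Z) {f : Z → ℝ}
    (hi : Integrable f μ) {s : Set Z} (hsm : MeasurableSet s)
    (hμs : μ s < ⊤) {C : ℝ} (hC : ∀ x, |f x| ≤ C) (h0 : ∀ x ∉ s, f x = 0) :
    |∫ x, f x ∂μ| ≤ C * (μ s).toReal := by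
  have hind : ∫ x, f x ∂μ = ∫ x in s, f x ∂μ := by
    rw [← integral_indicator hsm]
    congr 1
    exact (Set.indicator_eq_self.2 (Function.support_subset_iff'.2 h0)).symm
  rw [hind, ← Real.norm_eq_abs]
  exact norm_setIntegral_le_of_norm_le_const (C := C) hμs
    (fun x _ => by rw [Real.norm_eq_abs]; exact hC x)

end GMC

namespace GMC

variable {Z : Type*} [TopologicalSpace Z] [LocallyCompactSpace Z] [T2Space Z]
  [SecondCountableTopology Z] [MeasurableSpace Z] [BorelSpace Z]

set_option maxHeartbeats 1000000 in
/-- Vague sequential compactness of locally uniformly bounded measures. -/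
theorem vague_compactness (μ : ℕ → Measure Z)
    (hfin : ∀ i, IsFiniteMeasureOnCompacts (μ i))
    (hbd : ∀ K : Set Z, IsCompact K → ∃ c : ℝ≥0, ∀ i, μ i K ≤ c) :
    ∃ (ι : ℕ → ℕ) (ν : Measure Z), StrictMono ι ∧ ν.Regular ∧
      (∀ U : Set Z, IsOpen U → ν U ≤ Filter.atTop.liminf (fun k => μ (ι k) U)) ∧
      (∀ φ : Z → ℝ, Continuous φ → HasCompactSupport φ →
        Filter.Tendsto (fun k => ∫ x, φ x ∂(μ (ι k))) Filter.atTop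
          (nhds (∫ x, φ x ∂ν))) := by
  -- countable dense family of test functions
  obtain ⟨D₀, hD₀c, hD₀d⟩ := TopologicalSpace.exists_countable_dense C(Z, ℝ)
  have hD₀ne : D₀.Nonempty := hD₀d.nonempty
  obtain ⟨e, he⟩ := hD₀c.exists_eq_range hD₀ne
  set E := CompactExhaustion.choice Z with hE
  have hχ : ∀ n : ℕ, ∃ χ : Z → ℝ, Continuous χ ∧ HasCompactSupport χ ∧
      Set.EqOn χ 1 (E (n+1)) ∧ (∀ x, χ x ∈ Set.Icc (0:ℝ) 1) ∧ tsupport χ ⊆ E (n+2) := by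
    intro n
    obtain ⟨χ, hc, hcs, h1, h0, h01⟩ := exists_bump (E.isCompact (n+1)) isOpen_interior
      (E.subset_interior_succ (n+1))
    refine ⟨χ, hc, hcs, h1, h01, ?_⟩
    calc tsupport χ = closure (Function.support χ) := rfl
      _ ⊆ closure (interior (E (n+2))) :=
          closure_mono (Function.support_subset_iff'.2 h0)
      _ ⊆ E (n+2) := closure_minimal interior_subset (E.isCompact (n+2)).isClosed
  choose χ hχc hχcs hχ1 hχ01 hχsupp using hχ
  -- countable test family
  set test : ℕ → Z → ℝ := fun m x => (e m.unpair.1 : Z → ℝ) x * χ m.unpair.2 x with htest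
  have htestc : ∀ m, Continuous (test m) := fun m => (e m.unpair.1).continuous.mul (hχc _)
  have htestcs : ∀ m, HasCompactSupport (test m) :=
    fun m => HasCompactSupport.mul_left (hχcs _)
  have htestsupp : ∀ m, tsupport (test m) ⊆ E (m.unpair.2 + 2) := by
    intro m
    refine subset_trans ?_ (hχsupp m.unpair.2)
    refine closure_mono fun x hx => ?_
    simp only [Function.mem_support] at hx ⊢
    intro h; exact hx (by rw [htest]; simp [h])
  have htest0 : ∀ m, ∀ x ∉ E (m.unpair.2 + 2), test m x = 0 := by
    intro m x hx
    exact image_eq_zero_of_notMem_tsupport fun hmem => hx (htestsupp m hmem)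
  -- uniform bounds for the test integrals
  have hbdA : ∀ m : ℕ, ∃ A : ℝ, ∀ i, |∫ x, test m x ∂ μ i| ≤ A := by
    intro m
    obtain ⟨C, hC⟩ := (htestcs m).exists_bound_of_continuous (htestc m)
    obtain ⟨c, hc⟩ := hbd _ (E.isCompact (m.unpair.2 + 2))
    refine ⟨max C 0 * c, fun i => ?_⟩
    haveI := hfin i
    have h1 := abs_integral_le (μ i)
      ((htestc m).integrable_of_hasCompactSupport (htestcs m))
      (E.isCompact (m.unpair.2+2)).isClosed.measurableSet
      ((E.isCompact (m.unpair.2+2)).measure_lt_top)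
      (C := max C 0) (fun x => le_max_of_le_left (by simpa using hC x)) (htest0 m)
    refine h1.trans ?_
    have h2 : (μ i (E (m.unpair.2 + 2))).toReal ≤ (c : ℝ) := by
      have := hc i
      exact ENNReal.toReal_mono ENNReal.coe_ne_top this |>.trans (by simp)
    exact mul_le_mul_of_nonneg_left h2 (le_max_right _ _)
  choose A hA using hbdA
  -- subsequence extraction via compactness in `ℕ → ℝ`
  set F : ℕ → ℕ → ℝ := fun i m => ∫ x, test m x ∂ μ i with hF
  have hFmem : ∀ i, F i ∈ Set.univ.pi fun m => Set.Icc (-(A m)) (A m) := by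
    intro i m _
    exact abs_le.1 (hA m i)
  obtain ⟨a, -, ι, hι, hconv⟩ :=
    (isCompact_univ_pi fun m => isCompact_Icc).tendsto_subseq hFmem
  have hcoord : ∀ m, Filter.Tendsto (fun k => F (ι k) m) Filter.atTop (nhds (a m)) :=
    fun m => tendsto_pi_nhds.1 hconv m
  -- approximation of arbitrary test functions
  have happrox : ∀ (φ : Z → ℝ), Continuous φ → ∀ (n : ℕ), tsupport φ ⊆ E n →
      ∀ ε : ℝ, 0 < ε →
      ∃ m : ℕ, (∀ x, |φ x - test m x| ≤ ε) ∧ (∀ x ∉ E (n+2), φ x - test m x = 0) := by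
    intro φ hφ n hn ε hε
    set φc : C(Z, ℝ) := ⟨φ, hφ⟩ with hφc
    set V : Set (ℝ × ℝ) := {p | dist p.1 p.2 < ε} with hV
    have hVmem : V ∈ uniformity ℝ := Metric.dist_mem_uniformity hε
    set S : Set (C(Z,ℝ) × C(Z,ℝ)) := {fg | ∀ x ∈ E (n+2), (fg.1 x, fg.2 x) ∈ V} with hS
    have hSmem : S ∈ uniformity C(Z, ℝ) :=
      ContinuousMap.hasBasis_compactConvergenceUniformity.mem_of_mem
        (i := (E (n+2), V)) ⟨E.isCompact (n+2), hVmem⟩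
    have hball : UniformSpace.ball φc S ∈ nhds φc := UniformSpace.ball_mem_nhds φc hSmem
    obtain ⟨g, hgball, hgD⟩ := mem_closure_iff_nhds.1 (hD₀d φc) _ hball
    rw [he] at hgD
    obtain ⟨j, rfl⟩ := hgD
    refine ⟨Nat.pair j n, ?_, ?_⟩
    · intro x
      have htesteq : test (Nat.pair j n) x = (e j : Z → ℝ) x * χ n x := by
        rw [htest]; simp [Nat.unpair_pair]
      have hφmul : φ x = φ x * χ n x := by
        by_cases h : φ x = 0
        · rw [h]; ring
        · have hx : x ∈ tsupport φ := subset_closure (by simpa [Function.mem_support] using h)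
          have : χ n x = 1 := hχ1 n (E.subset_succ n (hn hx))
          rw [this]; ring
      rw [htesteq]
      have key : φ x - (e j : Z → ℝ) x * χ n x = (φ x - (e j : Z → ℝ) x) * χ n x := by
        rw [sub_mul, ← hφmul]
      rw [key, abs_mul, abs_of_nonneg (hχ01 n x).1]
      by_cases hx : x ∈ E (n+2)
      · have hd : dist (φc x) ((e j : Z → ℝ) x) < ε := hgball x hx
        rw [Real.dist_eq] at hd
        calc |φ x - (e j : Z → ℝ) x| * χ n x ≤ |φ x - (e j : Z → ℝ) x| * 1 :=
              mul_le_mul_of_nonneg_left (hχ01 n x).2 (abs_nonneg _)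
          _ ≤ ε := by rw [mul_one]; exact hd.le
      · have : χ n x = 0 := image_eq_zero_of_notMem_tsupport fun hmem => hx (hχsupp n hmem)
        rw [this, mul_zero]; exact hε.le
    · intro x hx
      have h1 : χ n x = 0 := image_eq_zero_of_notMem_tsupport fun hmem => hx (hχsupp n hmem)
      have h2 : φ x = 0 := by
        refine image_eq_zero_of_notMem_tsupport fun hmem => hx ?_
        exact E.subset (by omega) (hn hmem)
      have htesteq : test (Nat.pair j n) x = (e j : Z → ℝ) x * χ n x := by
        rw [htest]; simp [Nat.unpair_pair]
      rw [htesteq, h1, h2, mul_zero, sub_zero]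
  -- the integrals of every test function form a Cauchy sequence along the subsequence
  have hcauchy : ∀ (φ : Z → ℝ), Continuous φ → HasCompactSupport φ →
      CauchySeq (fun k => ∫ x, φ x ∂ μ (ι k)) := by
    intro φ hφ hφcs
    obtain ⟨n, hn⟩ := E.exists_superset_of_isCompact hφcs
    obtain ⟨c, hc⟩ := hbd _ (E.isCompact (n+2))
    rw [Metric.cauchySeq_iff]
    intro ε hε
    have hc1 : (0:ℝ) < (c:ℝ) + 1 := by positivity
    set ε' : ℝ := ε / (4 * ((c:ℝ) + 1)) with hε'
    have hε'pos : 0 < ε' := by positivity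
    obtain ⟨m, hm1, hm2⟩ := happrox φ hφ n hn ε' hε'pos
    have hdiffc : Continuous fun x => φ x - test m x := hφ.sub (htestc m)
    have hdiffcs : HasCompactSupport fun x => φ x - test m x :=
      HasCompactSupport.intro (E.isCompact (n+2)) hm2
    have hdiff : ∀ i, |∫ x, φ x ∂ μ i - F i m| ≤ ε' * c := by
      intro i
      haveI := hfin i
      have hsub : ∫ x, φ x ∂ μ i - F i m = ∫ x, (φ x - test m x) ∂ μ i := by
        rw [hF]
        exact (integral_sub (hφ.integrable_of_hasCompactSupport hφcs)
          ((htestc m).integrable_of_hasCompactSupport (htestcs m))).symm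
      rw [hsub]
      have h1 := abs_integral_le (μ i)
        (hdiffc.integrable_of_hasCompactSupport hdiffcs)
        (E.isCompact (n+2)).isClosed.measurableSet
        ((E.isCompact (n+2)).measure_lt_top) (C := ε') hm1 hm2
      refine h1.trans ?_
      have h2 : (μ i (E (n + 2))).toReal ≤ (c : ℝ) :=
        (ENNReal.toReal_mono ENNReal.coe_ne_top (hc i)).trans (by simp)
      exact mul_le_mul_of_nonneg_left h2 hε'pos.le
    have hFc : CauchySeq fun k => F (ι k) m := (hcoord m).cauchySeq
    rw [Metric.cauchySeq_iff] at hFc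
    obtain ⟨N, hN⟩ := hFc (ε/4) (by positivity)
    refine ⟨N, fun k hk l hl => ?_⟩
    have h1 := hdiff (ι k)
    have h2 := hdiff (ι l)
    have h3 := hN k hk l hl
    rw [Real.dist_eq] at h3 ⊢
    have hεc : ε' * c ≤ ε / 4 := by
      rw [hε']
      rw [div_mul_eq_mul_div, div_le_div_iff₀ (by positivity) (by norm_num)]
      nlinarith [hc1, c.coe_nonneg]
    have t1 : |∫ x, φ x ∂ μ (ι k) - ∫ x, φ x ∂ μ (ι l)|
        ≤ |∫ x, φ x ∂ μ (ι k) - F (ι k) m| + |F (ι k) m - ∫ x, φ x ∂ μ (ι l)| :=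
      abs_sub_le _ _ _
    have t2 : |F (ι k) m - ∫ x, φ x ∂ μ (ι l)|
        ≤ |F (ι k) m - F (ι l) m| + |F (ι l) m - ∫ x, φ x ∂ μ (ι l)| :=
      abs_sub_le _ _ _
    have e2 : |F (ι l) m - ∫ x, φ x ∂ μ (ι l)| ≤ ε/4 := by
      rw [abs_sub_comm]; exact h2.trans hεc
    linarith [h1.trans hεc]
  -- the limit functional
  set Λ : (Z → ℝ) → ℝ := fun φ => limUnder Filter.atTop
    (fun k => ∫ x, φ x ∂ μ (ι k)) with hΛdef
  have hΛt : ∀ (φ : Z → ℝ), Continuous φ → HasCompactSupport φ →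
      Filter.Tendsto (fun k => ∫ x, φ x ∂ μ (ι k)) Filter.atTop (nhds (Λ φ)) :=
    fun φ h1 h2 => (hcauchy φ h1 h2).tendsto_limUnder
  have hΛpos : IsPosLinear Λ := by
    constructor
    · intro f g hf hfcs hg hgcs
      refine tendsto_nhds_unique (hΛt (f + g) (hf.add hg) (hfcs.add hgcs)) ?_
      have := (hΛt f hf hfcs).add (hΛt g hg hgcs)
      refine this.congr fun k => ?_
      haveI := hfin (ι k)
      exact (integral_add (hf.integrable_of_hasCompactSupport hfcs)
        (hg.integrable_of_hasCompactSupport hgcs)).symm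
    · intro c f hf hfcs
      refine tendsto_nhds_unique (hΛt (c • f) (hf.const_smul c) (hfcs.smul_left)) ?_
      have := (hΛt f hf hfcs).const_mul c
      refine this.congr fun k => ?_
      rw [← smul_eq_mul, ← integral_smul]
      rfl
    · intro f g hf hfcs hg hgcs hle
      refine le_of_tendsto_of_tendsto' (hΛt f hf hfcs) (hΛt g hg hgcs) fun k => ?_
      haveI := hfin (ι k)
      exact integral_mono (hf.integrable_of_hasCompactSupport hfcs)
        (hg.integrable_of_hasCompactSupport hgcs) hle
  refine ⟨ι, rmkMeasure hΛpos, hι, rmkMeasure_regular hΛpos, ?_, ?_⟩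
  · -- liminf bound on open sets
    intro U hU
    refine rmkMeasure_open_le hΛpos hU ?_
    intro f hfc hfcs hf01 hf0
    have hone : ∀ i, ENNReal.ofReal (∫ x, f x ∂ μ i) ≤ μ i U := by
      intro i
      haveI := hfin i
      set s : Set Z := U ∩ tsupport f with hs
      have hsm : MeasurableSet s := hU.measurableSet.inter (isClosed_tsupport f).measurableSet
      have hμs : μ i s < ⊤ :=
        lt_of_le_of_lt (measure_mono Set.inter_subset_right) hfcs.measure_lt_top
      have habs := abs_integral_le (μ i) (hfc.integrable_of_hasCompactSupport hfcs) hsm hμs (C := 1)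
        (fun x => by
          rw [abs_of_nonneg (hf01 x).1]; exact (hf01 x).2)
        (fun x hx => by
          by_cases hxU : x ∈ U
          · have : x ∉ tsupport f := fun h => hx ⟨hxU, h⟩
            exact image_eq_zero_of_notMem_tsupport this
          · exact hf0 x hxU)
      have h2 : ∫ x, f x ∂ μ i ≤ (μ i s).toReal := by
        have := (abs_le.1 habs).2
        linarith [this]
      calc ENNReal.ofReal (∫ x, f x ∂ μ i) ≤ ENNReal.ofReal ((μ i s).toReal) :=
            ENNReal.ofReal_le_ofReal h2
        _ = μ i s := ENNReal.ofReal_toReal hμs.ne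
        _ ≤ μ i U := measure_mono Set.inter_subset_left
    have ht : Filter.Tendsto (fun k => ENNReal.ofReal (∫ x, f x ∂ μ (ι k)))
        Filter.atTop (nhds (ENNReal.ofReal (Λ f))) :=
      (ENNReal.continuous_ofReal.tendsto _).comp (hΛt f hfc hfcs)
    calc ENNReal.ofReal (Λ f)
        = Filter.atTop.liminf (fun k => ENNReal.ofReal (∫ x, f x ∂ μ (ι k))) :=
          ht.liminf_eq.symm
      _ ≤ Filter.atTop.liminf (fun k => μ (ι k) U) :=
          Filter.liminf_le_liminf (Filter.Eventually.of_forall fun k => hone (ι k))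
  · -- convergence of integrals
    intro φ hφ hφcs
    rw [rmk_integral hΛpos hφ hφcs]
    exact hΛt φ hφ hφcs

end GMC

namespace GMC

variable {X Y : Type*} [TopologicalSpace X] [LocallyCompactSpace X] [T2Space X]
    [SecondCountableTopology X] [MeasurableSpace X] [BorelSpace X]
    [TopologicalSpace Y] [LocallyCompactSpace Y] [T2Space Y]
    [SecondCountableTopology Y] [MeasurableSpace Y] [BorelSpace Y]

lemma integrable_comp_fst {m : Measure (X × Y)} {g : X → ℝ} (hg : Continuous g)
    (hcs : HasCompactSupport g) (hfin : m ((tsupport g) ×ˢ (Set.univ : Set Y)) < ⊤) :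
    Integrable (fun z : X × Y => g z.1) m := by
  obtain ⟨C, hC⟩ := hcs.exists_bound_of_continuous hg
  have hsm : MeasurableSet ((tsupport g) ×ˢ (Set.univ : Set Y)) :=
    (isClosed_tsupport g).measurableSet.prod MeasurableSet.univ
  have hsupp : Function.support (fun z : X × Y => g z.1) ⊆
      (tsupport g) ×ˢ (Set.univ : Set Y) := by
    intro z hz
    exact ⟨subset_tsupport g hz, Set.mem_univ _⟩
  rw [← integrableOn_iff_integrable_of_support_subset hsupp]
  have hconst : IntegrableOn (fun _ : X × Y => C) ((tsupport g) ×ˢ (Set.univ : Set Y)) m :=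
    integrableOn_const hfin.ne
  refine Integrable.mono' hconst ((hg.comp continuous_fst).aestronglyMeasurable.restrict) ?_
  exact Filter.Eventually.of_forall fun z => hC z.1

end GMC


end GMCAux

/-- **Compactness of graph measures.**  Let `X` and `Y` be
second-countable locally compact Hausdorff spaces, `p : X × Y → X` the projection, and
`Γᵢ` a sequence of Radon measures over `X × Y` such that (a) `sup_i Γᵢ (K ×ˢ univ) < ∞`
for every compact `K ⊆ X`, and (b) for every compact `K ⊆ X` and every `ε > 0` there is
a compact `L ⊆ Y` with `Γᵢ (K ×ˢ (Y ∖ L)) ≤ ε` for all `i`.  Then some subsequence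
`Γ_{i k}` converges, tested against all compactly supported continuous functions, to a
Radon measure `Γ` over `X × Y` with `Γ (K ×ˢ univ) < ∞` for every compact `K`; moreover
the pushforward `p_# Γ` is a Radon measure over `X` and
`∫ g d(p_# Γ_{i k}) → ∫ g d(p_# Γ)` for every compactly supported continuous
`g : X → ℝ`. -/
theorem graph_measures_compactness
    (X Y : Type*) [TopologicalSpace X] [LocallyCompactSpace X] [T2Space X]
    [SecondCountableTopology X] [MeasurableSpace X] [BorelSpace X]
    [TopologicalSpace Y] [LocallyCompactSpace Y] [T2Space Y]
    [SecondCountableTopology Y] [MeasurableSpace Y] [BorelSpace Y]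
    (Γ : ℕ → Measure (X × Y)) (hreg : ∀ i, (Γ i).Regular)
    (ha : ∀ K : Set X, IsCompact K → ∃ c : ENNReal, c < ⊤ ∧
      ∀ i, Γ i (K ×ˢ (Set.univ : Set Y)) ≤ c)
    (hb : ∀ K : Set X, IsCompact K → ∀ ε : ENNReal, 0 < ε →
      ∃ L : Set Y, IsCompact L ∧ ∀ i, Γ i (K ×ˢ Lᶜ) ≤ ε) :
    ∃ (ι : ℕ → ℕ) (Γ' : Measure (X × Y)), StrictMono ι ∧ Γ'.Regular ∧
      (∀ K : Set X, IsCompact K → Γ' (K ×ˢ (Set.univ : Set Y)) < ⊤) ∧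
      (∀ φ : X × Y → ℝ, Continuous φ → HasCompactSupport φ →
        Tendsto (fun k => ∫ q, φ q ∂(Γ (ι k))) atTop (nhds (∫ q, φ q ∂Γ'))) ∧
      (Γ'.map Prod.fst).Regular ∧
      (∀ g : X → ℝ, Continuous g → HasCompactSupport g →
        Tendsto (fun k => ∫ x, g x ∂((Γ (ι k)).map Prod.fst)) atTop
          (nhds (∫ x, g x ∂(Γ'.map Prod.fst)))) := by
  classical
  have hfin : ∀ i, IsFiniteMeasureOnCompacts (Γ i) := fun i =>
    (hreg i).toIsFiniteMeasureOnCompacts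
  have hbd : ∀ K : Set (X × Y), IsCompact K → ∃ c : NNReal, ∀ i, Γ i K ≤ c := by
    intro K hK
    obtain ⟨c, hc, hci⟩ := ha (Prod.fst '' K) (hK.image continuous_fst)
    refine ⟨c.toNNReal, fun i => ?_⟩
    have h1 : K ⊆ (Prod.fst '' K) ×ˢ (Set.univ : Set Y) := fun z hz =>
      ⟨Set.mem_image_of_mem _ hz, Set.mem_univ _⟩
    calc Γ i K ≤ Γ i ((Prod.fst '' K) ×ˢ Set.univ) := measure_mono h1
      _ ≤ c := hci i
      _ = c.toNNReal := (ENNReal.coe_toNNReal hc.ne).symm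
  obtain ⟨ι, ν, hι, hνreg, hliminf, htendsto⟩ := GMC.vague_compactness Γ hfin hbd
  have hKuniv : ∀ K : Set X, IsCompact K → ν (K ×ˢ (Set.univ : Set Y)) < ⊤ := by
    intro K hK
    obtain ⟨K', hK', hKK'⟩ := exists_compact_superset hK
    obtain ⟨c, hc, hci⟩ := ha K' hK'
    have hUopen : IsOpen ((interior K') ×ˢ (Set.univ : Set Y)) :=
      isOpen_interior.prod isOpen_univ
    have h1 : ν (K ×ˢ (Set.univ : Set Y)) ≤ ν ((interior K') ×ˢ (Set.univ : Set Y)) :=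
      measure_mono (Set.prod_mono hKK' subset_rfl)
    have h2 := hliminf _ hUopen
    have h3 : Filter.atTop.liminf
        (fun k => Γ (ι k) ((interior K') ×ˢ (Set.univ : Set Y))) ≤ c := by
      have h4 : ∀ k, Γ (ι k) ((interior K') ×ˢ (Set.univ : Set Y)) ≤ c := fun k =>
        le_trans (measure_mono (Set.prod_mono interior_subset subset_rfl)) (hci (ι k))
      calc Filter.atTop.liminf (fun k => Γ (ι k) ((interior K') ×ˢ (Set.univ : Set Y)))
          ≤ Filter.atTop.liminf (fun _ : ℕ => c) :=
            Filter.liminf_le_liminf (Filter.Eventually.of_forall h4)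
        _ = c := Filter.liminf_const c
    exact lt_of_le_of_lt (h1.trans (h2.trans h3)) hc
  haveI hνreg' := hνreg
  haveI hmapfin : IsFiniteMeasureOnCompacts (ν.map Prod.fst) := by
    constructor
    intro K hK
    rw [Measure.map_apply measurable_fst hK.isClosed.measurableSet, ← Set.prod_univ]
    exact hKuniv K hK
  have hmapreg : (ν.map Prod.fst).Regular :=
    MeasureTheory.Measure.Regular.of_sigmaCompactSpace_of_isLocallyFiniteMeasure _
  refine ⟨ι, ν, hι, hνreg, hKuniv, htendsto, hmapreg, ?_⟩
  intro g hg hgcs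
  have hmapint : ∀ m : Measure (X × Y), ∫ x, g x ∂(m.map Prod.fst) = ∫ z, g z.1 ∂m :=
    fun m => integral_map measurable_fst.aemeasurable hg.aestronglyMeasurable
  simp only [hmapint]
  -- setup
  set Kg : Set X := tsupport g with hKgdef
  have hKg : IsCompact Kg := hgcs
  obtain ⟨C₀, hC₀⟩ := hgcs.exists_bound_of_continuous hg
  set Cg : ℝ := max C₀ 0 with hCgdef
  have hCg : ∀ x, |g x| ≤ Cg := fun x => le_max_of_le_left (by simpa using hC₀ x)
  have hCg0 : 0 ≤ Cg := le_max_right _ _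
  obtain ⟨K', hK'c, hKK'⟩ := exists_compact_superset hKg
  obtain ⟨cK, hcKlt, hcK⟩ := ha Kg hKg
  have hintν : Integrable (fun z : X × Y => g z.1) ν :=
    GMC.integrable_comp_fst hg hgcs (hKuniv _ hKg)
  have hintΓ : ∀ i, Integrable (fun z : X × Y => g z.1) (Γ i) := fun i =>
    GMC.integrable_comp_fst hg hgcs (lt_of_le_of_lt (hcK i) hcKlt)
  rw [Metric.tendsto_atTop]
  intro ε hε
  set εR : ℝ := ε / (4 * (Cg + 1)) with hεRdef
  have hεR : 0 < εR := by positivity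
  obtain ⟨L, hL, hLb⟩ := hb K' hK'c (ENNReal.ofReal εR) (ENNReal.ofReal_pos.2 hεR)
  obtain ⟨χL, hχc, hχcs, hχ1, -, hχ01⟩ := GMC.exists_bump hL isOpen_univ (Set.subset_univ L)
  set φ : X × Y → ℝ := fun z => g z.1 * χL z.2 with hφdef
  have hφc : Continuous φ := (hg.comp continuous_fst).mul (hχc.comp continuous_snd)
  have hφcs : HasCompactSupport φ := by
    refine HasCompactSupport.intro (hKg.prod hχcs) fun z hz => ?_
    simp only [hφdef]
    by_cases h1 : z.1 ∈ Kg
    · have h2 : z.2 ∉ tsupport χL := fun h => hz ⟨h1, h⟩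
      simp [image_eq_zero_of_notMem_tsupport h2]
    · simp [image_eq_zero_of_notMem_tsupport h1]
  have hdz : ∀ z : X × Y, z ∉ Kg ×ˢ (Lᶜ : Set Y) → g z.1 - φ z = 0 := by
    intro z hz
    simp only [hφdef]
    by_cases h1 : z.1 ∈ Kg
    · have h2 : z.2 ∈ L := by
        by_contra h
        exact hz ⟨h1, h⟩
      rw [hχ1 h2]
      simp
    · rw [image_eq_zero_of_notMem_tsupport h1]
      simp
  have hdbound : ∀ z : X × Y, |g z.1 - φ z| ≤ Cg := by
    intro z
    simp only [hφdef]
    have : g z.1 - g z.1 * χL z.2 = g z.1 * (1 - χL z.2) := by ring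
    rw [this, abs_mul]
    have h1 : |1 - χL z.2| ≤ 1 := by
      rw [abs_le]
      constructor <;> [linarith [(hχ01 z.2).2]; linarith [(hχ01 z.2).1]]
    calc |g z.1| * |1 - χL z.2| ≤ Cg * 1 :=
          mul_le_mul (hCg z.1) h1 (abs_nonneg _) hCg0
      _ = Cg := mul_one _
  have hsm : MeasurableSet (Kg ×ˢ (Lᶜ : Set Y)) :=
    (isClosed_tsupport g).measurableSet.prod hL.isClosed.measurableSet.compl
  have hφintν : Integrable φ ν := hφc.integrable_of_hasCompactSupport hφcs
  have hφintΓ : ∀ i, Integrable φ (Γ i) := fun i => by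
    haveI := hfin i
    exact hφc.integrable_of_hasCompactSupport hφcs
  -- key estimate
  have key : ∀ m : Measure (X × Y), Integrable (fun z : X × Y => g z.1) m → Integrable φ m →
      m (Kg ×ˢ (Lᶜ : Set Y)) ≤ ENNReal.ofReal εR →
      |(∫ z, g z.1 ∂m) - ∫ z, φ z ∂m| ≤ ε / 4 := by
    intro m hint hφint hmle
    have hsub : (∫ z, g z.1 ∂m) - ∫ z, φ z ∂m = ∫ z, (g z.1 - φ z) ∂m :=
      (integral_sub hint hφint).symm
    have hfinle : m (Kg ×ˢ (Lᶜ : Set Y)) < ⊤ := lt_of_le_of_lt hmle ENNReal.ofReal_lt_top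
    have h1 := GMC.abs_integral_le m (hint.sub hφint) hsm hfinle (C := Cg) hdbound hdz
    have h2 : (m (Kg ×ˢ (Lᶜ : Set Y))).toReal ≤ εR := by
      have h3 := ENNReal.toReal_mono ENNReal.ofReal_ne_top hmle
      rwa [ENNReal.toReal_ofReal hεR.le] at h3
    rw [hsub]
    refine h1.trans ?_
    calc Cg * (m (Kg ×ˢ (Lᶜ : Set Y))).toReal ≤ Cg * εR :=
          mul_le_mul_of_nonneg_left h2 hCg0
      _ ≤ ε / 4 := by
          rw [hεRdef]
          have hne : (0:ℝ) < Cg + 1 := by positivity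
          have heq : Cg * (ε / (4 * (Cg + 1))) = (Cg / (Cg + 1)) * (ε / 4) := by
            rw [mul_div_assoc', div_mul_div_comm, mul_comm (4:ℝ)]
          rw [heq]
          have h5 : Cg / (Cg + 1) ≤ 1 := by
            rw [div_le_one hne]
            linarith
          exact mul_le_of_le_one_left (by positivity) h5
  -- measure bounds
  have hKgK' : Kg ⊆ interior K' := hKK'
  have hΓle : ∀ i, Γ i (Kg ×ˢ (Lᶜ : Set Y)) ≤ ENNReal.ofReal εR := fun i =>
    le_trans (measure_mono (Set.prod_mono (hKgK'.trans interior_subset) subset_rfl)) (hLb i)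
  have hνle : ν (Kg ×ˢ (Lᶜ : Set Y)) ≤ ENNReal.ofReal εR := by
    have hUopen : IsOpen ((interior K') ×ˢ (Lᶜ : Set Y)) :=
      isOpen_interior.prod hL.isClosed.isOpen_compl
    have h1 : ν (Kg ×ˢ (Lᶜ : Set Y)) ≤ ν ((interior K') ×ˢ (Lᶜ : Set Y)) :=
      measure_mono (Set.prod_mono hKgK' subset_rfl)
    have h2 := hliminf _ hUopen
    have h3 : Filter.atTop.liminf (fun k => Γ (ι k) ((interior K') ×ˢ (Lᶜ : Set Y)))
        ≤ ENNReal.ofReal εR := by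
      have h4 : ∀ k, Γ (ι k) ((interior K') ×ˢ (Lᶜ : Set Y)) ≤ ENNReal.ofReal εR := fun k =>
        le_trans (measure_mono (Set.prod_mono interior_subset subset_rfl)) (hLb (ι k))
      calc Filter.atTop.liminf (fun k => Γ (ι k) ((interior K') ×ˢ (Lᶜ : Set Y)))
          ≤ Filter.atTop.liminf (fun _ : ℕ => ENNReal.ofReal εR) :=
            Filter.liminf_le_liminf (Filter.Eventually.of_forall h4)
        _ = ENNReal.ofReal εR := Filter.liminf_const _
    exact h1.trans (h2.trans h3)
  -- convergence of ∫ φ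
  have hφt := htendsto φ hφc hφcs
  rw [Metric.tendsto_atTop] at hφt
  obtain ⟨N, hN⟩ := hφt (ε/4) (by positivity)
  refine ⟨N, fun k hk => ?_⟩
  have e1 := key (Γ (ι k)) (hintΓ (ι k)) (hφintΓ (ι k)) (hΓle (ι k))
  have e3 := key ν hintν hφintν hνle
  have e2 := hN k hk
  rw [Real.dist_eq] at e2 ⊢
  have t1 : |(∫ z, g z.1 ∂Γ (ι k)) - ∫ z, g z.1 ∂ν|
      ≤ |(∫ z, g z.1 ∂Γ (ι k)) - ∫ z, φ z ∂Γ (ι k)|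
        + |(∫ z, φ z ∂Γ (ι k)) - ∫ z, g z.1 ∂ν| := abs_sub_le _ _ _
  have t2 : |(∫ z, φ z ∂Γ (ι k)) - ∫ z, g z.1 ∂ν|
      ≤ |(∫ z, φ z ∂Γ (ι k)) - ∫ z, φ z ∂ν|
        + |(∫ z, φ z ∂ν) - ∫ z, g z.1 ∂ν| := abs_sub_le _ _ _
  have e3' : |(∫ z, φ z ∂ν) - ∫ z, g z.1 ∂ν| ≤ ε / 4 := by
    rw [abs_sub_comm]; exact e3
  linarith

end
end

section
/- Let Y be a finite-dimensional real normed vector space with dim Y ≥ 1 and let 0 ≤ s < ∞. Then E_s(Y), equipped with the norm ‖γ‖ = sup_{y ∈ Y} ‖Dγ(y)‖, is a separable Banach space: it is complete (every Cauchy sequence with respect to this norm converges in E_s(Y)) and separable. -/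
open MeasureTheory Topology

open Filter

noncomputable section

set_option maxHeartbeats 1000000
set_option synthInstance.maxHeartbeats 400000

/-- The test function space `E_s(Y)`: continuously differentiable `γ : Y → ℝ` with
`γ 0 = 0` whose derivative has support in the closed ball `B(0, s)`. -/
def ESs (Y : Type*) [NormedAddCommGroup Y] [NormedSpace ℝ Y] (s : ℝ) : Set (Y → ℝ) :=
  {γ | ContDiff ℝ 1 γ ∧ γ 0 = 0 ∧
    tsupport (fun y => fderiv ℝ γ y) ⊆ Metric.closedBall 0 s}

/-- Let `Y` be a finite-dimensional real normed vector space with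
`dim Y ≥ 1` and `0 ≤ s < ∞`.  Then `E_s(Y)`, normed by `‖γ‖ = sup_y ‖Dγ(y)‖`, is a
separable Banach space: every sequence in `E_s(Y)` which is Cauchy for this norm
converges in `E_s(Y)`, and there is a countable subset of `E_s(Y)` which is dense for
this norm. -/
theorem Es_separable_banach
    (Y : Type*) [NormedAddCommGroup Y] [NormedSpace ℝ Y] [FiniteDimensional ℝ Y]
    (hdim : 1 ≤ Module.finrank ℝ Y) (s : ℝ) (hs : 0 ≤ s) :
    (∀ f : ℕ → Y → ℝ, (∀ n, f n ∈ ESs Y s) →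
      (∀ ε : ℝ, 0 < ε → ∃ N : ℕ, ∀ m ≥ N, ∀ n ≥ N, ∀ y : Y,
        ‖fderiv ℝ (f m) y - fderiv ℝ (f n) y‖ ≤ ε) →
      ∃ g ∈ ESs Y s, ∀ ε : ℝ, 0 < ε → ∃ N : ℕ, ∀ n ≥ N, ∀ y : Y,
        ‖fderiv ℝ (f n) y - fderiv ℝ g y‖ ≤ ε) ∧
    (∃ D : Set (Y → ℝ), D.Countable ∧ D ⊆ ESs Y s ∧
      ∀ γ ∈ ESs Y s, ∀ ε : ℝ, 0 < ε → ∃ γ' ∈ D, ∀ y : Y,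
        ‖fderiv ℝ γ y - fderiv ℝ γ' y‖ ≤ ε) := by
  constructor
  · -- Completeness
    intro f hf hc
    set F : ℕ → Y → (Y →L[ℝ] ℝ) := fun n y => fderiv ℝ (f n) y with hFdef
    have hdiff : ∀ n, Differentiable ℝ (f n) := fun n => (hf n).1.differentiable one_ne_zero
    -- pointwise Cauchy of derivatives
    have hFcauchy : ∀ y : Y, CauchySeq (fun n => F n y) := by
      intro y
      rw [Metric.cauchySeq_iff]
      intro ε hε
      obtain ⟨N, hN⟩ := hc (ε/2) (by linarith)
      refine ⟨N, fun m hm n hn => ?_⟩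
      have h1 : dist (F m y) (F n y) ≤ ε / 2 := by
        rw [dist_eq_norm]; exact hN m hm n hn y
      linarith
    set G : Y → (Y →L[ℝ] ℝ) := fun y => limUnder atTop (fun n => F n y) with hGdef
    have hFG : ∀ y : Y, Tendsto (fun n => F n y) atTop (𝓝 (G y)) :=
      fun y => (hFcauchy y).tendsto_limUnder
    -- difference estimate via the mean value inequality
    have hdiffest : ∀ m n : ℕ, ∀ C : ℝ, (∀ y, ‖F m y - F n y‖ ≤ C) →
        ∀ y : Y, ‖f m y - f n y‖ ≤ C * ‖y‖ := by
      intro m n C hC y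
      have hsub : Differentiable ℝ (fun z => f m z - f n z) := (hdiff m).sub (hdiff n)
      have key : ∀ x ∈ (Set.univ : Set Y), ‖fderiv ℝ (fun z => f m z - f n z) x‖ ≤ C := by
        intro x _
        rw [fderiv_fun_sub ((hdiff m).differentiableAt) ((hdiff n).differentiableAt)]
        exact hC x
      have hmvt := convex_univ.norm_image_sub_le_of_norm_fderiv_le
        (fun x _ => hsub.differentiableAt) key
        (Set.mem_univ (0:Y)) (Set.mem_univ y)
      simpa [(hf m).2.1, (hf n).2.1] using hmvt
    -- pointwise Cauchy of the functions themselves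
    have hfcauchy : ∀ y : Y, CauchySeq (fun n => f n y) := by
      intro y
      rw [Metric.cauchySeq_iff]
      intro ε hε
      have hpos : 0 < ε / (2 * (‖y‖ + 1)) := by positivity
      obtain ⟨N, hN⟩ := hc _ hpos
      refine ⟨N, fun m hm n hn => ?_⟩
      have h1 : ‖f m y - f n y‖ ≤ (ε / (2 * (‖y‖ + 1))) * ‖y‖ :=
        hdiffest m n _ (fun z => hN m hm n hn z) y
      have h2 : (ε / (2 * (‖y‖ + 1))) * ‖y‖ < ε := by
        rw [div_mul_eq_mul_div, div_lt_iff₀ (by positivity)]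
        nlinarith [norm_nonneg y]
      rw [Real.dist_eq]
      exact lt_of_le_of_lt h1 h2
    set g : Y → ℝ := fun y => limUnder atTop (fun n => f n y) with hgdef
    have hfg : ∀ y : Y, Tendsto (fun n => f n y) atTop (𝓝 (g y)) :=
      fun y => (hfcauchy y).tendsto_limUnder
    -- uniform Cauchy / uniform convergence of derivatives
    have hucauchy : UniformCauchySeqOn F atTop Set.univ := by
      rw [Metric.uniformCauchySeqOn_iff]
      intro ε hε
      obtain ⟨N, hN⟩ := hc (ε/2) (by linarith)
      refine ⟨N, fun m hm n hn x _ => ?_⟩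
      have h1 : dist (F m x) (F n x) ≤ ε / 2 := by
        rw [dist_eq_norm]; exact hN m hm n hn x
      linarith
    have hunif : TendstoUniformly F G atTop := by
      rw [← tendstoUniformlyOn_univ]
      exact hucauchy.tendstoUniformlyOn_of_tendsto (fun y _ => hFG y)
    have hhas : ∀ y : Y, HasFDerivAt g (G y) y := fun y =>
      hasFDerivAt_of_tendstoUniformly hunif
        (fun n x => ((hdiff n).differentiableAt).hasFDerivAt) hfg y
    have hgG : fderiv ℝ g = G := funext fun y => (hhas y).fderiv
    have hGcont : Continuous G :=
      hunif.continuous (Filter.Frequently.of_forall fun n =>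
        (hf n).1.continuous_fderiv one_ne_zero)
    have hgC1 : ContDiff ℝ 1 g := by
      rw [contDiff_one_iff_fderiv]
      exact ⟨fun y => (hhas y).differentiableAt, by rw [hgG]; exact hGcont⟩
    have hg0 : g 0 = 0 := by
      have h0 : Tendsto (fun n : ℕ => f n 0) atTop (𝓝 (0:ℝ)) := by
        have he : (fun n : ℕ => f n 0) = fun _ => (0:ℝ) := funext fun n => (hf n).2.1
        rw [he]; exact tendsto_const_nhds
      exact tendsto_nhds_unique (hfg 0) h0
    have hGzero : ∀ y : Y, y ∉ Metric.closedBall (0:Y) s → G y = 0 := by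
      intro y hy
      have hz : ∀ n, F n y = 0 := fun n =>
        image_eq_zero_of_notMem_tsupport (fun hmem => hy ((hf n).2.2 hmem))
      have h0 : Tendsto (fun n => F n y) atTop (𝓝 (0 : Y →L[ℝ] ℝ)) := by
        have he : (fun n => F n y) = fun _ => (0 : Y →L[ℝ] ℝ) := funext hz
        rw [he]; exact tendsto_const_nhds
      exact tendsto_nhds_unique (hFG y) h0
    have hsupp : tsupport (fun y => fderiv ℝ g y) ⊆ Metric.closedBall 0 s := by
      apply closure_minimal _ Metric.isClosed_closedBall
      intro y hy
      rw [Function.mem_support] at hy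
      by_contra hyn
      exact hy (by show fderiv ℝ g y = 0; rw [hgG]; exact hGzero y hyn)
    refine ⟨g, ⟨hgC1, hg0, hsupp⟩, ?_⟩
    intro ε hε
    obtain ⟨N, hN⟩ := hc ε hε
    refine ⟨N, fun n hn y => ?_⟩
    rw [hgG]
    have htend : Tendsto (fun m => ‖F n y - F m y‖) atTop (𝓝 ‖F n y - G y‖) :=
      (Tendsto.sub tendsto_const_nhds (hFG y)).norm
    refine le_of_tendsto htend ?_
    filter_upwards [Filter.eventually_ge_atTop N] with m hm
    rw [norm_sub_rev]
    exact hN m hm n hn y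
  · -- Separability
    set K := Metric.closedBall (0:Y) s with hKdef
    haveI : CompactSpace K := isCompact_iff_compactSpace.mp (isCompact_closedBall 0 s)
    haveI : MetricSpace C(K, Y →L[ℝ] ℝ) := inferInstance
    haveI : SecondCountableTopology C(K, Y →L[ℝ] ℝ) := inferInstance
    set S : Set C(K, Y →L[ℝ] ℝ) :=
      {h | ∃ γ ∈ ESs Y s, ∀ x : K, h x = fderiv ℝ γ x} with hSdef
    haveI : TopologicalSpace.SeparableSpace ↥S := inferInstance
    obtain ⟨T, hTc, hTd⟩ := TopologicalSpace.exists_countable_dense ↥S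
    set c : ↥S → (Y → ℝ) := fun t => t.2.choose with hcdef
    have hcmem : ∀ t : ↥S, c t ∈ ESs Y s := fun t => t.2.choose_spec.1
    have hcval : ∀ t : ↥S, ∀ x : K, (t : C(K, Y →L[ℝ] ℝ)) x = fderiv ℝ (c t) x :=
      fun t => t.2.choose_spec.2
    refine ⟨c '' T, hTc.image c, ?_, ?_⟩
    · rintro _ ⟨t, _, rfl⟩; exact hcmem t
    · intro γ hγ ε hε
      have hcontD : Continuous fun x : K => fderiv ℝ γ x :=
        (hγ.1.continuous_fderiv one_ne_zero).comp continuous_subtype_val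
      set h : C(K, Y →L[ℝ] ℝ) := ⟨fun x => fderiv ℝ γ x, hcontD⟩ with hhdef
      have hhS : h ∈ S := ⟨γ, hγ, fun x => rfl⟩
      obtain ⟨t, htT, htd⟩ := hTd.exists_dist_lt (⟨h, hhS⟩ : ↥S) hε
      refine ⟨c t, ⟨t, htT, rfl⟩, fun y => ?_⟩
      by_cases hy : y ∈ K
      · have hb := ContinuousMap.dist_apply_le_dist
          (f := h) (g := (t : C(K, Y →L[ℝ] ℝ))) (⟨y, hy⟩ : K)
        rw [dist_eq_norm] at hb
        have happ : h (⟨y, hy⟩ : K) = fderiv ℝ γ y := rfl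
        have tapp := hcval t (⟨y, hy⟩ : K)
        rw [happ, tapp] at hb
        rw [Subtype.dist_eq] at htd
        exact hb.trans (le_of_lt htd)
      · have h1 : fderiv ℝ γ y = 0 :=
          image_eq_zero_of_notMem_tsupport (fun hmem => hy (hγ.2.2 hmem))
        have h2 : fderiv ℝ (c t) y = 0 :=
          image_eq_zero_of_notMem_tsupport (fun hmem => hy ((hcmem t).2.2 hmem))
        rw [h1, h2, sub_zero, norm_zero]
        exact le_of_lt hε

end
end
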